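/- arXiv:1212.6617 — 7 statements merged into one kernel-verified Lean document; each statement's English description precedes it below -/
import Mathlib

section
/- Let B be a real symmetric n×n matrix with B_{ii} = 1 for all i and B_{ij} ≤ 0 for all i ≠ j, such that the matrix I − B is irreducible (i.e., the graph on {1,...,n} with edges {i,j} whenever B_{ij} ≠ 0 is connected) and B has exactly one negative eigenvalue. Then every eigenvector of B corresponding to the negative eigenvalue has all coordinates of the same sign (all strictly positive or all strictly negative). -/
/-!
As `μ < 0` is the only negative eigenvalue of `B`, it is its least eigenvalue and it is simple,
so every vector whose Rayleigh quotient is at most `μ` lies on the `μ`-eigenline. Since the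
off-diagonal entries of `B` are nonpositive, passing from `v` to `|v|` keeps the norm and does not
increase the quadratic form, so `v` and `|v|` both lie on that line and `v` has weakly constant
sign. Connectivity makes the sign strict: a vanishing coordinate of a nonnegative eigenvector
forces the coordinates at its neighbours to vanish.
-/

open Matrix

theorem Finset.lt_of_card_filter_lt_eq_one {ι α : Type*} [Fintype ι] [LinearOrder α] {f : ι → α}
    {t : α} (h : (Finset.univ.filter (fun i => f i < t)).card = 1) {i₀ : ι} (hi₀ : f i₀ < t) :
    ∀ i ≠ i₀, f i₀ < f i := by
  obtain ⟨a, ha⟩ := Finset.card_eq_one.mp h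
  have hmem : ∀ {i}, f i < t → i = a := fun {i} hi => by
    have : i ∈ Finset.univ.filter (fun i => f i < t) := by simpa using hi
    rwa [ha, Finset.mem_singleton] at this
  intro i hi
  by_contra! hle
  exact hi ((hmem (hle.trans_lt hi₀)).trans (hmem hi₀).symm)

theorem SimpleGraph.Preconnected.forall_of_adj_imp {V : Type*} {G : SimpleGraph V}
    (hG : G.Preconnected) {p : V → Prop} (hp : ∀ u v, G.Adj u v → p u → p v) {u : V} (hu : p u)
    (v : V) : p v := by
  have := (SimpleGraph.reachable_iff_reflTransGen u v).mp (hG u v)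
  induction this with
  | refl => exact hu
  | tail _ hadj ih => exact hp _ _ hadj ih

theorem Pi.nonneg_or_nonpos_of_eq_smul_of_abs_eq_smul {ι R : Type*} [CommRing R] [LinearOrder R]
    [IsStrictOrderedRing R] {x w : ι → R} {a b : R} (hx : x = a • w) (habs : |x| = b • w) :
    0 ≤ x ∨ x ≤ 0 := by
  by_contra! h
  simp only [Pi.le_def, Pi.zero_apply, not_forall, not_le] at h
  obtain ⟨⟨i, hi⟩, ⟨j, hj⟩⟩ := h
  -- at a negative and a positive coordinate, `a * |x k| = b * x k` forces `a = -b` and `a = b`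
  have hcoord : ∀ k, a * |x k| = b * x k := fun k => by
    have habs_k := congrFun habs k
    have hx_k := congrFun hx k
    simp only [Pi.abs_apply, Pi.smul_apply, smul_eq_mul] at habs_k hx_k
    rw [habs_k, hx_k]
    ring
  have hi' := hcoord i
  have hj' := hcoord j
  rw [abs_of_neg hi] at hi'
  rw [abs_of_pos hj] at hj'
  have hab : a + b = 0 :=
    (mul_eq_zero.mp (by linear_combination -hi' : (a + b) * x i = 0)).resolve_right hi.ne
  have hab' : a - b = 0 :=
    (mul_eq_zero.mp (by linear_combination hj' : (a - b) * x j = 0)).resolve_right hj.ne'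
  have ha : a = 0 := by linarith
  simp [congrFun hx j, ha] at hj

namespace Matrix

variable {ι : Type*} [Fintype ι]

section ZMatrix

variable {R : Type*} [CommRing R] [LinearOrder R] [IsStrictOrderedRing R] {A : Matrix ι ι R}

theorem abs_dotProduct_mulVec_abs_le (hoff : ∀ i j, i ≠ j → A i j ≤ 0) (x : ι → R) :
    |x| ⬝ᵥ A *ᵥ |x| ≤ x ⬝ᵥ A *ᵥ x := by
  simp only [dotProduct, mulVec, Finset.mul_sum, Pi.abs_apply]
  refine Finset.sum_le_sum fun i _ => Finset.sum_le_sum fun j _ => ?_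
  rcases eq_or_ne i j with rfl | hij
  · rw [mul_left_comm, abs_mul_abs_self, mul_left_comm]
  · have := mul_le_mul_of_nonpos_left (le_abs_self (x i * x j)) (hoff i j hij)
    rw [abs_mul] at this
    linarith

theorem pos_of_mulVec_eq_smul_of_nonneg (hA : A.IsSymm) (hoff : ∀ i j, i ≠ j → A i j ≤ 0)
    (hconn : (SimpleGraph.fromRel fun i j => A i j ≠ 0).Connected) {μ : R} {x : ι → R}
    (hx : A *ᵥ x = μ • x) (hx0 : x ≠ 0) (hnonneg : 0 ≤ x) (i : ι) : 0 < x i := by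
  have hzero : ∀ i j, (SimpleGraph.fromRel fun i j => A i j ≠ 0).Adj i j → x i = 0 → x j = 0 := by
    rintro i j ⟨-, hAij⟩ hi
    replace hAij : A i j ≠ 0 := hAij.elim id fun h => hA.apply i j ▸ h
    have hrow : ∑ k, A i k * x k = 0 := by simpa [mulVec, dotProduct, hi] using congrFun hx i
    have hterm : ∀ k ∈ Finset.univ, A i k * x k ≤ 0 := fun k _ => by
      rcases eq_or_ne k i with rfl | hk
      · simp [hi]
      · exact mul_nonpos_of_nonpos_of_nonneg (hoff i k hk.symm) (hnonneg k)
    exact (mul_eq_zero.mp ((Finset.sum_eq_zero_iff_of_nonpos hterm).mp hrow j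
      (Finset.mem_univ j))).resolve_left hAij
  obtain ⟨j, hj⟩ := Function.ne_iff.mp hx0
  exact (hnonneg i).lt_of_ne fun hi => hj (hconn.preconnected.forall_of_adj_imp hzero hi.symm j)

end ZMatrix

variable [DecidableEq ι]

theorem mem_spectrum_of_mulVec_eq_smul {K : Type*} [Field K] {A : Matrix ι ι K} {μ : K}
    {v : ι → K} (hv : A *ᵥ v = μ • v) (hv0 : v ≠ 0) : μ ∈ spectrum K A := by
  rw [← spectrum_toLin']
  exact (Module.End.hasEigenvalue_of_hasEigenvector
    ⟨Module.End.mem_eigenspace_iff.mpr hv, hv0⟩).mem_spectrum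

namespace IsHermitian

variable {B : Matrix ι ι ℝ} (hB : B.IsHermitian)

theorem dotProduct_eq_sum_eigenvectorBasis (x y : ι → ℝ) :
    x ⬝ᵥ y = ∑ i, (⇑(hB.eigenvectorBasis i) ⬝ᵥ x) * (⇑(hB.eigenvectorBasis i) ⬝ᵥ y) := by
  have := hB.eigenvectorBasis.sum_inner_mul_inner (WithLp.toLp 2 x) (WithLp.toLp 2 y)
  simp only [EuclideanSpace.inner_eq_star_dotProduct, star_trivial] at this
  rw [dotProduct_comm x y, ← this]
  simp only [dotProduct_comm y]

theorem eq_sum_eigenvectorBasis (x : ι → ℝ) :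
    x = ∑ i, (⇑(hB.eigenvectorBasis i) ⬝ᵥ x) • ⇑(hB.eigenvectorBasis i) := by
  have := congrArg WithLp.ofLp (hB.eigenvectorBasis.sum_repr' (WithLp.toLp 2 x))
  simp only [EuclideanSpace.inner_eq_star_dotProduct, star_trivial, WithLp.ofLp_sum,
    WithLp.ofLp_smul] at this
  simp [dotProduct_comm, this]

theorem eigenvectorBasis_dotProduct_mulVec (i : ι) (x : ι → ℝ) :
    ⇑(hB.eigenvectorBasis i) ⬝ᵥ B *ᵥ x = hB.eigenvalues i * (⇑(hB.eigenvectorBasis i) ⬝ᵥ x) := by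
  rw [dotProduct_mulVec, ← mulVec_transpose, ← conjTranspose_eq_transpose_of_trivial, hB.eq,
    hB.mulVec_eigenvectorBasis, smul_dotProduct, smul_eq_mul]

theorem dotProduct_mulVec_eq_sum_eigenvalues (x : ι → ℝ) :
    x ⬝ᵥ B *ᵥ x = ∑ i, hB.eigenvalues i * (⇑(hB.eigenvectorBasis i) ⬝ᵥ x) ^ 2 := by
  simp only [hB.dotProduct_eq_sum_eigenvectorBasis x, eigenvectorBasis_dotProduct_mulVec]
  exact Finset.sum_congr rfl fun i _ => by ring

theorem exists_eq_smul_eigenvectorBasis_of_le {i₀ : ι}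
    (hgap : ∀ i ≠ i₀, hB.eigenvalues i₀ < hB.eigenvalues i) {x : ι → ℝ}
    (hx : x ⬝ᵥ B *ᵥ x ≤ hB.eigenvalues i₀ * (x ⬝ᵥ x)) :
    ∃ c : ℝ, x = c • ⇑(hB.eigenvectorBasis i₀) := by
  set c := fun i => ⇑(hB.eigenvectorBasis i) ⬝ᵥ x
  have hterm : ∀ i ∈ Finset.univ, 0 ≤ (hB.eigenvalues i - hB.eigenvalues i₀) * c i ^ 2 := by
    intro i _
    rcases eq_or_ne i i₀ with rfl | hi
    · simp
    · exact mul_nonneg (sub_nonneg.mpr (hgap i hi).le) (sq_nonneg _)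
  have hsum : ∑ i, (hB.eigenvalues i - hB.eigenvalues i₀) * c i ^ 2 = 0 := by
    refine le_antisymm ?_ (Finset.sum_nonneg hterm)
    rw [hB.dotProduct_mulVec_eq_sum_eigenvalues, hB.dotProduct_eq_sum_eigenvectorBasis x x,
      Finset.mul_sum] at hx
    simp only [sub_mul, Finset.sum_sub_distrib, c, sq] at hx ⊢
    exact sub_nonpos.mpr hx
  have hzero : ∀ i ≠ i₀, c i = 0 := fun i hi =>
    pow_eq_zero_iff two_ne_zero |>.mp <| (mul_eq_zero.mp
      ((Finset.sum_eq_zero_iff_of_nonneg hterm).mp hsum i (Finset.mem_univ i))).resolve_left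
      (sub_ne_zero.mpr (hgap i hi).ne')
  refine ⟨c i₀, ?_⟩
  rw [hB.eq_sum_eigenvectorBasis x, Finset.sum_eq_single_of_mem i₀ (Finset.mem_univ i₀)
    fun i _ hi => by
    change c i • _ = 0
    rw [hzero i hi, zero_smul]]

end IsHermitian
end Matrix

theorem stmt0_general (n : ℕ) (B : Matrix (Fin n) (Fin n) ℝ) (hB : B.IsHermitian)
    (hoff : ∀ i j, i ≠ j → B i j ≤ 0)
    (hconn : (SimpleGraph.fromRel (fun i j : Fin n => B i j ≠ 0)).Connected)
    (hneg : (Finset.univ.filter (fun i => hB.eigenvalues i < 0)).card = 1)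
    (v : Fin n → ℝ) (μ : ℝ) (hμ : μ < 0) (hv : B.mulVec v = μ • v) (hv0 : v ≠ 0) :
    (∀ i, 0 < v i) ∨ (∀ i, v i < 0) := by
  obtain ⟨i₀, rfl⟩ : μ ∈ Set.range hB.eigenvalues :=
    hB.spectrum_real_eq_range_eigenvalues ▸ mem_spectrum_of_mulVec_eq_smul hv hv0
  have hgap := Finset.lt_of_card_filter_lt_eq_one hneg hμ
  have hrayleigh : v ⬝ᵥ B *ᵥ v = hB.eigenvalues i₀ * (v ⬝ᵥ v) := by
    rw [hv, dotProduct_smul, smul_eq_mul]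
  have hrayleigh_abs : |v| ⬝ᵥ B *ᵥ |v| ≤ hB.eigenvalues i₀ * (|v| ⬝ᵥ |v|) := by
    have hnorm : |v| ⬝ᵥ |v| = v ⬝ᵥ v := by
      simp only [dotProduct, Pi.abs_apply, abs_mul_abs_self]
    exact hnorm ▸ hrayleigh ▸ abs_dotProduct_mulVec_abs_le hoff v
  obtain ⟨a, ha⟩ := hB.exists_eq_smul_eigenvectorBasis_of_le hgap hrayleigh.le
  obtain ⟨b, hb⟩ := hB.exists_eq_smul_eigenvectorBasis_of_le hgap hrayleigh_abs
  have hsymm : B.IsSymm := IsSymm.ext fun i j => by simpa using hB.apply i j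
  rcases Pi.nonneg_or_nonpos_of_eq_smul_of_abs_eq_smul ha hb with hnonneg | hnonpos
  · exact .inl (pos_of_mulVec_eq_smul_of_nonneg hsymm hoff hconn hv hv0 hnonneg)
  · have hv' : B *ᵥ -v = hB.eigenvalues i₀ • -v := by rw [mulVec_neg, hv, smul_neg]
    exact .inr fun i => neg_pos.mp <| pos_of_mulVec_eq_smul_of_nonneg hsymm hoff hconn hv'
      (neg_ne_zero.mpr hv0) (neg_nonneg.mpr hnonpos) i

/-- For a real symmetric matrix `B` with unit diagonal, nonpositive
off-diagonal entries, irreducible `I - B` (connected graph on nonzero entries) and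
exactly one negative eigenvalue, every eigenvector for a negative eigenvalue has all
coordinates of the same strict sign. -/
theorem stmt0 (n : ℕ) (B : Matrix (Fin n) (Fin n) ℝ) (hB : B.IsHermitian)
    (hdiag : ∀ i, B i i = 1)
    (hoff : ∀ i j, i ≠ j → B i j ≤ 0)
    (hconn : (SimpleGraph.fromRel (fun i j : Fin n => B i j ≠ 0)).Connected)
    (hneg : (Finset.univ.filter (fun i => hB.eigenvalues i < 0)).card = 1)
    (v : Fin n → ℝ) (μ : ℝ) (hμ : μ < 0) (hv : B.mulVec v = μ • v) (hv0 : v ≠ 0) :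
    (∀ i, 0 < v i) ∨ (∀ i, v i < 0) :=
  stmt0_general n B hB hoff hconn hneg v μ hμ hv hv0
end

section
/- Let B be a symmetric bilinear form on ℝⁿ of signature (n−1,1) with negative-eigenvalue unit eigenvector o, and for v with |v|₁ := ⟨v,o⟩ ≠ 0 write v̂ = v/|v|₁. For x, y ∈ Q \ {0} (where Q is the isotropic cone of B): (a) B(x,y) = 0 if and only if x̂ = ŷ; (b) if x̂ ≠ ŷ then B(x̂, ŷ) < 0. -/
/-!
Diagonalise `B` in an orthonormal eigenbasis. The eigenvector `o` has coordinates only along the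
unique negative eigenvalue, so every vector Euclidean-orthogonal to `o` has coordinates only along
positive eigenvalues: `B` is positive definite on `o^⊥`. In particular a nonzero isotropic vector
is not orthogonal to `o`, so `x̂` and `ŷ` are defined, and since `x̂ ⬝ o = ŷ ⬝ o = 1` their
difference lies in `o^⊥`. Isotropy of `x̂` and `ŷ` gives `B(x̂ - ŷ, x̂ - ŷ) = -2 B(x̂, ŷ)`, which is
therefore `≤ 0`, with equality iff `x̂ = ŷ`.
-/

open Matrix

theorem exists_forall_pos_of_card_filter {ι α : Type*} [Fintype ι] [DecidableEq ι] [LinearOrder α] [Zero α]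
    (f : ι → α) (hneg : (Finset.univ.filter (fun i => f i < 0)).card = 1)
    (hpos : (Finset.univ.filter (fun i => 0 < f i)).card = Fintype.card ι - 1) :
    ∃ i₀, ∀ i ≠ i₀, 0 < f i := by
  obtain ⟨i₀, hi₀⟩ := Finset.card_eq_one.mp hneg
  refine ⟨i₀, fun i hi => ?_⟩
  have hdisj : Disjoint (Finset.univ.filter (fun i => f i < 0))
      (Finset.univ.filter (fun i => 0 < f i)) :=
    Finset.disjoint_filter.mpr fun j _ h₁ h₂ => lt_irrefl _ (h₁.trans h₂)
  have hunion : Finset.univ.filter (fun i => f i < 0) ∪ Finset.univ.filter (fun i => 0 < f i) =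
      Finset.univ := by
    apply Finset.eq_univ_of_card
    have : 0 < Fintype.card ι := Fintype.card_pos_iff.mpr ⟨i₀⟩
    rw [Finset.card_union_of_disjoint hdisj, hneg, hpos]
    omega
  rcases Finset.mem_union.mp (hunion ▸ Finset.mem_univ i) with h | h
  · rw [hi₀, Finset.mem_singleton] at h
    exact absurd h hi
  · exact (Finset.mem_filter.mp h).2

namespace Matrix.IsHermitian

variable {ι : Type*} [Fintype ι] [DecidableEq ι] {A : Matrix ι ι ℝ} (hA : A.IsHermitian)

noncomputable def eigenCoord (v : ι → ℝ) : ι → ℝ :=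
  star (hA.eigenvectorUnitary : Matrix ι ι ℝ) *ᵥ v

theorem dotProduct_eigenCoord (v w : ι → ℝ) :
    hA.eigenCoord v ⬝ᵥ hA.eigenCoord w = v ⬝ᵥ w := by
  rw [eigenCoord, eigenCoord, dotProduct_mulVec, vecMul_mulVec, star_eq_conjTranspose,
    conjTranspose_eq_transpose_of_trivial, transpose_transpose,
    ← conjTranspose_eq_transpose_of_trivial, ← star_eq_conjTranspose,
    Unitary.mul_star_self_of_mem hA.eigenvectorUnitary.2, vecMul_one]

theorem eq_zero_of_eigenCoord_eq_zero {v : ι → ℝ} (hv : hA.eigenCoord v = 0) : v = 0 := by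
  rw [← dotProduct_self_eq_zero, ← hA.dotProduct_eigenCoord, hv, zero_dotProduct]

theorem star_eigenvectorUnitary_mul_self :
    star (hA.eigenvectorUnitary : Matrix ι ι ℝ) * A =
      diagonal hA.eigenvalues * star (hA.eigenvectorUnitary : Matrix ι ι ℝ) := by
  have hspec : A = hA.eigenvectorUnitary * diagonal hA.eigenvalues *
      star (hA.eigenvectorUnitary : Matrix ι ι ℝ) := by
    simpa using hA.spectral_theorem
  refine (congrArg (star (hA.eigenvectorUnitary : Matrix ι ι ℝ) * ·) hspec).trans ?_
  simp only [← Matrix.mul_assoc, Unitary.star_mul_self_of_mem hA.eigenvectorUnitary.2,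
    Matrix.one_mul]

theorem eigenCoord_mulVec (v : ι → ℝ) (i : ι) :
    hA.eigenCoord (A *ᵥ v) i = hA.eigenvalues i * hA.eigenCoord v i := by
  rw [eigenCoord, mulVec_mulVec, star_eigenvectorUnitary_mul_self, ← mulVec_mulVec,
    mulVec_diagonal, eigenCoord]

theorem dotProduct_mulVec_eq_sum (v w : ι → ℝ) :
    v ⬝ᵥ A *ᵥ w = ∑ i, hA.eigenvalues i * hA.eigenCoord v i * hA.eigenCoord w i := by
  rw [← hA.dotProduct_eigenCoord, dotProduct]
  refine Finset.sum_congr rfl fun i _ => ?_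
  rw [hA.eigenCoord_mulVec]
  ring

theorem eigenCoord_eq_zero_of_mulVec_eq_smul {o : ι → ℝ} {μ : ℝ} (ho : A *ᵥ o = μ • o) {i : ι}
    (hi : hA.eigenvalues i ≠ μ) : hA.eigenCoord o i = 0 := by
  have h := hA.eigenCoord_mulVec o i
  rw [ho, eigenCoord, mulVec_smul, Pi.smul_apply, smul_eq_mul, ← eigenCoord] at h
  have : (hA.eigenvalues i - μ) * hA.eigenCoord o i = 0 := by linear_combination -h
  exact (mul_eq_zero.mp this).resolve_left (sub_ne_zero.mpr hi)

end Matrix.IsHermitian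

def Matrix.PosDefOnOrthogonal {ι K : Type*} [Fintype ι] [CommRing K] [PartialOrder K]
    (B : Matrix ι ι K) (o : ι → K) : Prop :=
  ∀ v, v ⬝ᵥ o = 0 → v ≠ 0 → 0 < v ⬝ᵥ B *ᵥ v

theorem Matrix.IsHermitian.posDefOnOrthogonal_of_mulVec_eq_smul {ι : Type*} [Fintype ι]
    [DecidableEq ι] {A : Matrix ι ι ℝ} (hA : A.IsHermitian) {i₀ : ι}
    (hpos : ∀ i ≠ i₀, 0 < hA.eigenvalues i) {o : ι → ℝ} {μ : ℝ} (hμ : μ ≤ 0)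
    (ho : A *ᵥ o = μ • o) (ho0 : o ≠ 0) : A.PosDefOnOrthogonal o := by
  intro v hv hv0
  have hoi : ∀ i ≠ i₀, hA.eigenCoord o i = 0 := fun i hi =>
    hA.eigenCoord_eq_zero_of_mulVec_eq_smul ho (hμ.trans_lt (hpos i hi)).ne'
  have hoi₀ : hA.eigenCoord o i₀ ≠ 0 := fun h => ho0 <| hA.eq_zero_of_eigenCoord_eq_zero <|
    funext fun i => if hi : i = i₀ then hi ▸ h else hoi i hi
  have hvi₀ : hA.eigenCoord v i₀ = 0 := by
    rw [← hA.dotProduct_eigenCoord, dotProduct, Finset.sum_eq_single i₀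
      (fun i _ hi => by rw [hoi i hi, mul_zero]) (by simp)] at hv
    exact (mul_eq_zero.mp hv).resolve_right hoi₀
  obtain ⟨j, hj⟩ : ∃ j, hA.eigenCoord v j ≠ 0 := by
    by_contra! h
    exact hv0 (hA.eq_zero_of_eigenCoord_eq_zero (funext h))
  have hji₀ : j ≠ i₀ := by
    rintro rfl
    exact hj hvi₀
  rw [hA.dotProduct_mulVec_eq_sum]
  refine Finset.sum_pos' (fun i _ => ?_) ⟨j, Finset.mem_univ _, ?_⟩
  · by_cases hi : i = i₀
    · simp [hi, hvi₀]
    · rw [mul_assoc]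
      exact mul_nonneg (hpos i hi).le (mul_self_nonneg _)
  · rw [mul_assoc]
    exact mul_pos (hpos j hji₀) (mul_self_pos.mpr hj)

section Isotropic

variable {ι K : Type*} [Fintype ι]

theorem Matrix.IsSymm.dotProduct_mulVec_comm [CommSemiring K] {B : Matrix ι ι K}
    (hB : B.IsSymm) (x y : ι → K) : y ⬝ᵥ B *ᵥ x = x ⬝ᵥ B *ᵥ y := by
  rw [dotProduct_mulVec, dotProduct_comm, ← mulVec_transpose, hB.eq]

theorem Matrix.IsSymm.sub_dotProduct_mulVec_sub_of_isotropic [CommRing K] {B : Matrix ι ι K}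
    (hB : B.IsSymm) {x y : ι → K} (hx : x ⬝ᵥ B *ᵥ x = 0) (hy : y ⬝ᵥ B *ᵥ y = 0) :
    (x - y) ⬝ᵥ B *ᵥ (x - y) = -2 * (x ⬝ᵥ B *ᵥ y) := by
  rw [mulVec_sub, dotProduct_sub, sub_dotProduct, sub_dotProduct, hx, hy,
    hB.dotProduct_mulVec_comm]
  ring

theorem smul_dotProduct_mulVec_smul_of_isotropic [CommSemiring K] {B : Matrix ι ι K}
    {x : ι → K} (hx : x ⬝ᵥ B *ᵥ x = 0) (t : K) : (t • x) ⬝ᵥ B *ᵥ (t • x) = 0 := by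
  rw [mulVec_smul, dotProduct_smul, smul_dotProduct, hx, smul_zero, smul_zero]

theorem inv_smul_dotProduct_self [Field K] {x o : ι → K} (hxo : x ⬝ᵥ o ≠ 0) :
    (x ⬝ᵥ o)⁻¹ • x ⬝ᵥ o = 1 := by
  rw [smul_dotProduct, smul_eq_mul, inv_mul_cancel₀ hxo]

namespace Matrix.PosDefOnOrthogonal

variable {B : Matrix ι ι K} {o x y : ι → K}

theorem dotProduct_ne_zero_of_isotropic [CommRing K] [PartialOrder K] (hB : B.PosDefOnOrthogonal o)
    (hx : x ⬝ᵥ B *ᵥ x = 0) (hx0 : x ≠ 0) : x ⬝ᵥ o ≠ 0 :=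
  fun hxo => (hB x hxo hx0).ne' hx

variable [Field K] [LinearOrder K] [IsStrictOrderedRing K]

theorem dotProduct_mulVec_neg_of_isotropic (hB : B.PosDefOnOrthogonal o) (hsymm : B.IsSymm)
    (hx : x ⬝ᵥ B *ᵥ x = 0) (hy : y ⬝ᵥ B *ᵥ y = 0) (hxy : x ⬝ᵥ o = y ⬝ᵥ o) (hne : x ≠ y) :
    x ⬝ᵥ B *ᵥ y < 0 := by
  have h := hB (x - y) (by rw [sub_dotProduct, hxy, sub_self]) (sub_ne_zero.mpr hne)
  rw [hsymm.sub_dotProduct_mulVec_sub_of_isotropic hx hy] at h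
  linarith

theorem dotProduct_mulVec_eq_zero_iff_of_isotropic (hB : B.PosDefOnOrthogonal o)
    (hsymm : B.IsSymm) (hx : x ⬝ᵥ B *ᵥ x = 0) (hy : y ⬝ᵥ B *ᵥ y = 0)
    (hxy : x ⬝ᵥ o = y ⬝ᵥ o) : x ⬝ᵥ B *ᵥ y = 0 ↔ x = y := by
  refine ⟨fun h => ?_, fun h => h ▸ hx⟩
  by_contra hne
  exact (hB.dotProduct_mulVec_neg_of_isotropic hsymm hx hy hxy hne).ne h

theorem inv_smul_dotProduct_mulVec_neg_of_isotropic (hB : B.PosDefOnOrthogonal o)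
    (hsymm : B.IsSymm) (hx : x ⬝ᵥ B *ᵥ x = 0) (hx0 : x ≠ 0) (hy : y ⬝ᵥ B *ᵥ y = 0)
    (hy0 : y ≠ 0) (hne : (x ⬝ᵥ o)⁻¹ • x ≠ (y ⬝ᵥ o)⁻¹ • y) :
    ((x ⬝ᵥ o)⁻¹ • x) ⬝ᵥ B *ᵥ ((y ⬝ᵥ o)⁻¹ • y) < 0 :=
  hB.dotProduct_mulVec_neg_of_isotropic hsymm (smul_dotProduct_mulVec_smul_of_isotropic hx _)
    (smul_dotProduct_mulVec_smul_of_isotropic hy _)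
    ((inv_smul_dotProduct_self (hB.dotProduct_ne_zero_of_isotropic hx hx0)).trans
      (inv_smul_dotProduct_self (hB.dotProduct_ne_zero_of_isotropic hy hy0)).symm) hne

theorem dotProduct_mulVec_eq_zero_iff_inv_smul_eq (hB : B.PosDefOnOrthogonal o)
    (hsymm : B.IsSymm) (hx : x ⬝ᵥ B *ᵥ x = 0) (hx0 : x ≠ 0) (hy : y ⬝ᵥ B *ᵥ y = 0)
    (hy0 : y ≠ 0) : x ⬝ᵥ B *ᵥ y = 0 ↔ (x ⬝ᵥ o)⁻¹ • x = (y ⬝ᵥ o)⁻¹ • y := by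
  have hxo := hB.dotProduct_ne_zero_of_isotropic hx hx0
  have hyo := hB.dotProduct_ne_zero_of_isotropic hy hy0
  have hscale : ((x ⬝ᵥ o)⁻¹ • x) ⬝ᵥ B *ᵥ ((y ⬝ᵥ o)⁻¹ • y) =
      (x ⬝ᵥ o)⁻¹ * (y ⬝ᵥ o)⁻¹ * (x ⬝ᵥ B *ᵥ y) := by
    rw [mulVec_smul, dotProduct_smul, smul_dotProduct, smul_eq_mul, smul_eq_mul]
    ring
  rw [← hB.dotProduct_mulVec_eq_zero_iff_of_isotropic hsymm
    (smul_dotProduct_mulVec_smul_of_isotropic hx _) (smul_dotProduct_mulVec_smul_of_isotropic hy _)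
    ((inv_smul_dotProduct_self hxo).trans (inv_smul_dotProduct_self hyo).symm), hscale]
  simp [hxo, hyo]

end Matrix.PosDefOnOrthogonal

end Isotropic

/-- For nonzero isotropic vectors `x, y` of a form of signature `(n-1,1)`:
(a) `B(x,y) = 0` iff the normalizations coincide; (b) if the normalizations differ then
`B(x̂, ŷ) < 0`. -/
theorem stmt2 (n : ℕ) (B : Matrix (Fin n) (Fin n) ℝ) (hB : B.IsHermitian)
    (hneg : (Finset.univ.filter (fun i => hB.eigenvalues i < 0)).card = 1)
    (hpos : (Finset.univ.filter (fun i => 0 < hB.eigenvalues i)).card = n - 1)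
    (o : Fin n → ℝ) (μ : ℝ) (hμ : μ < 0) (ho : B.mulVec o = μ • o)
    (honorm : o ⬝ᵥ o = 1)
    (x y : Fin n → ℝ)
    (hx : x ⬝ᵥ B.mulVec x = 0) (hx0 : x ≠ 0)
    (hy : y ⬝ᵥ B.mulVec y = 0) (hy0 : y ≠ 0) :
    (x ⬝ᵥ B.mulVec y = 0 ↔ (x ⬝ᵥ o)⁻¹ • x = (y ⬝ᵥ o)⁻¹ • y) ∧
    ((x ⬝ᵥ o)⁻¹ • x ≠ (y ⬝ᵥ o)⁻¹ • y →
      ((x ⬝ᵥ o)⁻¹ • x) ⬝ᵥ B.mulVec ((y ⬝ᵥ o)⁻¹ • y) < 0) := by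
  obtain ⟨i₀, hpos₀⟩ :=
    exists_forall_pos_of_card_filter hB.eigenvalues hneg (by rwa [Fintype.card_fin])
  have ho0 : o ≠ 0 := by
    rintro rfl
    simp at honorm
  have hO := hB.posDefOnOrthogonal_of_mulVec_eq_smul hpos₀ hμ.le ho ho0
  have hsymm : B.IsSymm := isHermitian_iff_isSymm.mp hB
  exact ⟨hO.dotProduct_mulVec_eq_zero_iff_inv_smul_eq hsymm hx hx0 hy hy0,
    hO.inv_smul_dotProduct_mulVec_neg_of_isotropic hsymm hx hx0 hy hy0⟩
end

section
/- With B of signature (n−1,1) as above, for every x ∈ Q̂ and every simple root α ∈ Δ one has B(α, x) < 1/(2|α|₁). -/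
/-!
Split off the negative eigendirection `o`: on `o⊥` the form `B` is positive semidefinite, since
its only negative eigenvector is a multiple of `o`. Writing `e = αᵢ`, `t = oᵢ`, `m = -μ` and
projecting `e` and `x` to `o⊥` gives vectors `e'`, `x'` with `B(e',e') = 1 + m t²`,
`B(x',x') = m` and `B(e',x') = B(e,x) + m t`. Cauchy–Schwarz on `o⊥` yields
`(B(e,x) + m t)² ≤ m + m² t²`, whereas `B(e,x) ≥ 1/(2t)` would force
`(B(e,x) + m t)² ≥ m + m² t² + 1/(4t²)`.
-/

open Matrix

namespace Matrix.IsHermitian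

variable {m : Type*} [Fintype m] {B : Matrix m m ℝ}

lemma dotProduct_mulVec_comm (hB : B.IsHermitian) (u w : m → ℝ) :
    u ⬝ᵥ B *ᵥ w = w ⬝ᵥ B *ᵥ u := by
  rw [dotProduct_mulVec, ← mulVec_transpose, ← conjTranspose_eq_transpose_of_trivial, hB.eq,
    dotProduct_comm]

lemma sq_dotProduct_mulVec_le (hB : B.IsHermitian) {u w : m → ℝ}
    (h : ∀ s : ℝ, 0 ≤ (s • u - w) ⬝ᵥ B *ᵥ (s • u - w)) :
    (u ⬝ᵥ B *ᵥ w) ^ 2 ≤ (u ⬝ᵥ B *ᵥ u) * (w ⬝ᵥ B *ᵥ w) := by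
  have hdisc := discrim_le_zero (a := u ⬝ᵥ B *ᵥ u) (b := -2 * (u ⬝ᵥ B *ᵥ w))
    (c := w ⬝ᵥ B *ᵥ w) fun s => by
      refine (h s).trans_eq ?_
      simp only [mulVec_sub, mulVec_smul, dotProduct_sub, sub_dotProduct, dotProduct_smul,
        smul_dotProduct, smul_eq_mul, hB.dotProduct_mulVec_comm w u]
      ring
  rw [discrim] at hdisc
  linarith

lemma dotProduct_mulVec_sub_smul_eigenvector (hB : B.IsHermitian) {o : m → ℝ} {μ : ℝ}
    (ho : B *ᵥ o = μ • o) (honorm : o ⬝ᵥ o = 1) (u w : m → ℝ) :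
    (u - (u ⬝ᵥ o) • o) ⬝ᵥ B *ᵥ (w - (w ⬝ᵥ o) • o) = u ⬝ᵥ B *ᵥ w - μ * (u ⬝ᵥ o) * (w ⬝ᵥ o) := by
  simp only [mulVec_sub, mulVec_smul, dotProduct_sub, sub_dotProduct, dotProduct_smul,
    smul_dotProduct, hB.dotProduct_mulVec_comm o w, ho, smul_eq_mul, honorm]
  ring

variable [DecidableEq m]

lemma sum_eigenvectorBasis_dotProduct_smul (hB : B.IsHermitian) (v : m → ℝ) :
    ∑ j, (hB.eigenvectorBasis j ⬝ᵥ v) • ⇑(hB.eigenvectorBasis j) = v := by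
  simpa [EuclideanSpace.inner_eq_star_dotProduct, dotProduct_comm] using
    congrArg WithLp.ofLp (hB.eigenvectorBasis.sum_repr' (WithLp.toLp 2 v))

lemma dotProduct_mulVec_self_eq_sum (hB : B.IsHermitian) (v : m → ℝ) :
    v ⬝ᵥ B *ᵥ v = ∑ j, hB.eigenvalues j * (hB.eigenvectorBasis j ⬝ᵥ v) ^ 2 := by
  conv_lhs => arg 2; rw [← hB.sum_eigenvectorBasis_dotProduct_smul v]
  simp only [mulVec_sum, mulVec_smul, hB.mulVec_eigenvectorBasis, dotProduct_sum]
  refine Finset.sum_congr rfl fun j _ => ?_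
  rw [dotProduct_smul, dotProduct_smul, dotProduct_comm v, smul_eq_mul, smul_eq_mul]
  ring

lemma eigenvectorBasis_dotProduct_eq_zero (hB : B.IsHermitian) {o : m → ℝ} {μ : ℝ}
    (ho : B *ᵥ o = μ • o) {j : m} (hj : hB.eigenvalues j ≠ μ) :
    hB.eigenvectorBasis j ⬝ᵥ o = 0 := by
  have h := hB.dotProduct_mulVec_comm (hB.eigenvectorBasis j) o
  rw [ho, hB.mulVec_eigenvectorBasis, dotProduct_smul, dotProduct_smul, smul_eq_mul, smul_eq_mul,
    dotProduct_comm o] at h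
  exact (mul_eq_mul_right_iff.mp h.symm).resolve_left hj

lemma dotProduct_mulVec_self_nonneg_of_dotProduct_eq_zero (hB : B.IsHermitian)
    (hneg : (Finset.univ.filter (fun j => hB.eigenvalues j < 0)).card ≤ 1)
    {o : m → ℝ} {μ : ℝ} (ho : B *ᵥ o = μ • o) (hμ : μ < 0) (ho0 : o ≠ 0)
    {v : m → ℝ} (hv : v ⬝ᵥ o = 0) : 0 ≤ v ⬝ᵥ B *ᵥ v := by
  rw [hB.dotProduct_mulVec_self_eq_sum]
  refine Finset.sum_nonneg fun j _ => ?_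
  rcases le_or_gt 0 (hB.eigenvalues j) with hj | hj
  · positivity
  -- `λⱼ` is the only negative eigenvalue, so `o` lies on the line of the `j`-th eigenvector.
  have hother : ∀ k ≠ j, hB.eigenvectorBasis k ⬝ᵥ o = 0 := fun k hk =>
    hB.eigenvectorBasis_dotProduct_eq_zero ho fun hk' =>
      hk (Finset.card_le_one.mp hneg k (by simp [hk', hμ]) j (by simp [hj]))
  have hoj : o = (hB.eigenvectorBasis j ⬝ᵥ o) • ⇑(hB.eigenvectorBasis j) := by
    conv_lhs => rw [← hB.sum_eigenvectorBasis_dotProduct_smul o]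
    exact Finset.sum_eq_single j (fun k _ hk => by rw [hother k hk, zero_smul]) (by simp)
  have hjv : hB.eigenvectorBasis j ⬝ᵥ v = 0 := by
    rw [hoj, dotProduct_smul, smul_eq_mul, dotProduct_comm v] at hv
    exact (mul_eq_zero.mp hv).resolve_left fun h0 => ho0 (by rw [hoj, h0, zero_smul])
  simp [hjv]

end Matrix.IsHermitian

theorem stmt5_general (n : ℕ) (B : Matrix (Fin n) (Fin n) ℝ) (hB : B.IsHermitian)
    (hdiag : ∀ i, B i i = 1)
    (hneg : (Finset.univ.filter (fun i => hB.eigenvalues i < 0)).card = 1)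
    (o : Fin n → ℝ) (μ : ℝ) (hμ : μ < 0) (ho : B.mulVec o = μ • o)
    (honorm : o ⬝ᵥ o = 1) (hopos : ∀ i, 0 < o i)
    (x : Fin n → ℝ) (hxQ : x ⬝ᵥ B.mulVec x = 0) (hx1 : x ⬝ᵥ o = 1)
    (i : Fin n) :
    B.mulVec x i < 1 / (2 * o i) := by
  have ht : 0 < o i := hopos i
  have ho0 : o ≠ 0 := by rintro rfl; simp at honorm
  have hee : Pi.single i 1 ⬝ᵥ B *ᵥ Pi.single i 1 = 1 := by simp [hdiag]
  have hproj : ∀ u, (u - (u ⬝ᵥ o) • o) ⬝ᵥ o = 0 := by simp [honorm]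
  have hcs := hB.sq_dotProduct_mulVec_le
    (u := Pi.single i 1 - (Pi.single i 1 ⬝ᵥ o) • o) (w := x - (x ⬝ᵥ o) • o)
    fun s => hB.dotProduct_mulVec_self_nonneg_of_dotProduct_eq_zero hneg.le ho hμ ho0
      (by rw [sub_dotProduct, smul_dotProduct, hproj, hproj, smul_zero, sub_zero])
  simp only [hB.dotProduct_mulVec_sub_smul_eigenvector ho honorm] at hcs
  rw [hee, hxQ, hx1, single_one_dotProduct, single_one_dotProduct] at hcs
  rw [lt_div_iff₀ (by positivity)]
  by_contra! hc
  nlinarith [mul_le_mul_of_nonneg_left hcs (sq_nonneg (2 * o i)),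
    pow_le_pow_left₀ (by nlinarith : 0 ≤ 1 - 2 * μ * o i ^ 2)
      (by nlinarith : 1 - 2 * μ * o i ^ 2 ≤ 2 * o i * ((B *ᵥ x) i - μ * o i)) 2]

/-- For a Coxeter bilinear form of signature `(n-1,1)`, every point
`x ∈ Q̂` and every simple root `αᵢ` (standard basis vector, with `|αᵢ|₁ = o i > 0`)
satisfy `B(αᵢ, x) < 1/(2|αᵢ|₁)`. -/
theorem stmt5 (n : ℕ) (B : Matrix (Fin n) (Fin n) ℝ) (hB : B.IsHermitian)
    (hdiag : ∀ i, B i i = 1)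
    (hoff : ∀ i j, i ≠ j → B i j ≤ 0)
    (hneg : (Finset.univ.filter (fun i => hB.eigenvalues i < 0)).card = 1)
    (hpos : (Finset.univ.filter (fun i => 0 < hB.eigenvalues i)).card = n - 1)
    (o : Fin n → ℝ) (μ : ℝ) (hμ : μ < 0) (ho : B.mulVec o = μ • o)
    (honorm : o ⬝ᵥ o = 1) (hopos : ∀ i, 0 < o i)
    (x : Fin n → ℝ) (hxQ : x ⬝ᵥ B.mulVec x = 0) (hx1 : x ⬝ᵥ o = 1)
    (i : Fin n) :
    B.mulVec x i < 1 / (2 * o i) :=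
  stmt5_general n B hB hdiag hneg o μ hμ ho honorm hopos x hxQ hx1 i
end

section
/- Under the normalized action, for a simple root α and points x, y in the visible area V_α := {z ∈ Q̂ : B(α,z) ≥ 0}, one has |B(s_α · x, s_α · y)| ≥ |B(x,y)|, with strict inequality whenever x ∉ ∂V_α or y ∉ ∂V_α (i.e., B(α,x) > 0 or B(α,y) > 0). -/
/-!
The form `B` is positive definite on the hyperplane `v ⬝ᵥ o = 0`, because in an orthonormal
eigenbasis `o` spans the only negative direction. Two consequences for points `z` with
`B(z,z) = 0`, `z ⬝ᵥ o = 1`: distinct such points satisfy `B(x,y) < 0`, as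
`B(x-y,x-y) = -2 B(x,y)`; and testing positivity on `(α ⬝ᵥ o) z - α` gives
`2 (α ⬝ᵥ o) B(α,z) < B(α,α) = 1`. The reflection `s_α` preserves `B`, so normalizing divides
`B(x,y)` by the product of the factors `s_α(z) ⬝ᵥ o = 1 - 2 B(α,z) (α ⬝ᵥ o) ∈ (0,1]`, and a
factor is `< 1` as soon as `B(α,z) > 0`.
-/

open Matrix

namespace Matrix

variable {ι κ : Type*} [Fintype ι] [Fintype κ]

lemma IsSymm.dotProduct_mulVec_comm_s7 {B : Matrix ι ι ℝ} (hB : B.IsSymm) (x y : ι → ℝ) :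
    x ⬝ᵥ B *ᵥ y = y ⬝ᵥ B *ᵥ x := by
  rw [dotProduct_mulVec, ← mulVec_transpose, hB.eq, dotProduct_comm]

lemma _root_.OrthonormalBasis.dotProduct_eq_sum (b : OrthonormalBasis κ ℝ (EuclideanSpace ℝ ι))
    (u v : ι → ℝ) : u ⬝ᵥ v = ∑ j, (⇑(b j) ⬝ᵥ u) * (⇑(b j) ⬝ᵥ v) := by
  have h := b.sum_inner_mul_inner (WithLp.toLp 2 u) (WithLp.toLp 2 v)
  simp only [EuclideanSpace.inner_eq_star_dotProduct, star_trivial, dotProduct_comm v] at h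
  exact h.symm

lemma _root_.OrthonormalBasis.eq_zero_of_forall_dotProduct_eq_zero
    (b : OrthonormalBasis κ ℝ (EuclideanSpace ℝ ι)) {v : ι → ℝ} (h : ∀ j, ⇑(b j) ⬝ᵥ v = 0) :
    v = 0 :=
  dotProduct_self_eq_zero.mp (by rw [b.dotProduct_eq_sum]; simp [h])

variable [DecidableEq ι] {A : Matrix ι ι ℝ}

lemma IsHermitian.eigenvectorBasis_dotProduct_mulVec_s7 (hA : A.IsHermitian) (j : ι) (v : ι → ℝ) :
    ⇑(hA.eigenvectorBasis j) ⬝ᵥ A *ᵥ v = hA.eigenvalues j * (⇑(hA.eigenvectorBasis j) ⬝ᵥ v) := by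
  rw [(isHermitian_iff_isSymm.mp hA).dotProduct_mulVec_comm_s7, dotProduct_comm,
    hA.mulVec_eigenvectorBasis, smul_dotProduct, smul_eq_mul]

lemma IsHermitian.dotProduct_mulVec_self_eq_sum_s7 (hA : A.IsHermitian) (v : ι → ℝ) :
    v ⬝ᵥ A *ᵥ v = ∑ j, hA.eigenvalues j * (⇑(hA.eigenvectorBasis j) ⬝ᵥ v) ^ 2 := by
  rw [hA.eigenvectorBasis.dotProduct_eq_sum]
  simp only [hA.eigenvectorBasis_dotProduct_mulVec_s7]
  exact Finset.sum_congr rfl fun j _ => by ring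

lemma IsHermitian.dotProduct_mulVec_pos_of_dotProduct_eq_zero (hA : A.IsHermitian) {j₀ : ι}
    (hpos : ∀ j ≠ j₀, 0 < hA.eigenvalues j) {μ : ℝ} (hμ : μ ≤ 0) {o : ι → ℝ}
    (ho : A *ᵥ o = μ • o) (ho0 : o ≠ 0) {v : ι → ℝ} (hvo : v ⬝ᵥ o = 0) (hv : v ≠ 0) :
    0 < v ⬝ᵥ A *ᵥ v := by
  set b := hA.eigenvectorBasis
  have hoj : ∀ j ≠ j₀, ⇑(b j) ⬝ᵥ o = 0 := by
    intro j hj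
    have h := hA.eigenvectorBasis_dotProduct_mulVec_s7 j o
    rw [ho, dotProduct_smul, smul_eq_mul] at h
    have h' : (hA.eigenvalues j - μ) * (⇑(b j) ⬝ᵥ o) = 0 := by linarith
    exact (mul_eq_zero.mp h').resolve_left (by linarith [hpos j hj])
  have hoj₀ : ⇑(b j₀) ⬝ᵥ o ≠ 0 := fun h =>
    ho0 (b.eq_zero_of_forall_dotProduct_eq_zero fun j => by
      obtain rfl | hj := eq_or_ne j j₀
      exacts [h, hoj j hj])
  have hvj₀ : ⇑(b j₀) ⬝ᵥ v = 0 := by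
    have h := b.dotProduct_eq_sum v o
    rw [Finset.sum_eq_single j₀ (fun j _ hj => by rw [hoj j hj, mul_zero]) (by simp), hvo] at h
    exact (mul_eq_zero.mp h.symm).resolve_right hoj₀
  obtain ⟨k, hk⟩ : ∃ k, ⇑(b k) ⬝ᵥ v ≠ 0 := by
    by_contra! h
    exact hv (b.eq_zero_of_forall_dotProduct_eq_zero h)
  have hkj₀ : k ≠ j₀ := by rintro rfl; exact hk hvj₀
  rw [hA.dotProduct_mulVec_self_eq_sum_s7]
  refine Finset.sum_pos' (fun j _ => ?_) ⟨k, Finset.mem_univ k, by have := hpos k hkj₀; positivity⟩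
  obtain rfl | hj := eq_or_ne j j₀
  · simp [b, hvj₀]
  · exact mul_nonneg (hpos j hj).le (sq_nonneg _)

end Matrix

lemma exists_forall_ne_pos_of_card_filter {ι : Type*} [Fintype ι] (f : ι → ℝ)
    (hneg : (Finset.univ.filter (fun i => f i < 0)).card = 1)
    (hpos : (Finset.univ.filter (fun i => 0 < f i)).card = Fintype.card ι - 1) :
    ∃ j₀, ∀ j ≠ j₀, 0 < f j := by
  classical
  obtain ⟨j₀, hj₀⟩ := Finset.card_eq_one.mp hneg
  have hfj₀ : f j₀ < 0 := by
    simpa using (Finset.ext_iff.mp hj₀ j₀).mpr (Finset.mem_singleton_self j₀)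
  have hsub : Finset.univ.filter (fun i => 0 < f i) ⊆ Finset.univ.erase j₀ := fun j hj =>
    Finset.mem_erase.mpr
      ⟨by rintro rfl; exact (Finset.mem_filter.mp hj).2.not_gt hfj₀, Finset.mem_univ j⟩
  have heq := Finset.eq_of_subset_of_card_le hsub
    (by rw [Finset.card_erase_of_mem (Finset.mem_univ j₀), Finset.card_univ, hpos])
  refine ⟨j₀, fun j hj => ?_⟩
  have hj' : j ∈ Finset.univ.filter (fun i => 0 < f i) := by
    rw [heq]; exact Finset.mem_erase.mpr ⟨hj, Finset.mem_univ j⟩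
  simpa using hj'

section Lorentzian

variable {ι : Type*} [Fintype ι] {B : Matrix ι ι ℝ} {o : ι → ℝ}

lemma dotProduct_mulVec_neg_of_isotropic (hB : B.IsSymm)
    (hpd : ∀ v, v ⬝ᵥ o = 0 → v ≠ 0 → 0 < v ⬝ᵥ B *ᵥ v) {x y : ι → ℝ}
    (hx : x ⬝ᵥ B *ᵥ x = 0) (hy : y ⬝ᵥ B *ᵥ y = 0) (hxy : x ⬝ᵥ o = y ⬝ᵥ o) (hne : x ≠ y) :
    x ⬝ᵥ B *ᵥ y < 0 := by
  have h := hpd (x - y) (by rw [sub_dotProduct, hxy, sub_self]) (sub_ne_zero.mpr hne)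
  have hexp : (x - y) ⬝ᵥ B *ᵥ (x - y) = -2 * (x ⬝ᵥ B *ᵥ y) := by
    simp only [mulVec_sub, sub_dotProduct, dotProduct_sub, hx, hy, hB.dotProduct_mulVec_comm_s7 y x]
    ring
  linarith

lemma two_mul_dotProduct_mulVec_lt_of_isotropic (hB : B.IsSymm)
    (hpd : ∀ v, v ⬝ᵥ o = 0 → v ≠ 0 → 0 < v ⬝ᵥ B *ᵥ v) {z e : ι → ℝ}
    (hz : z ⬝ᵥ B *ᵥ z = 0) (hzo : z ⬝ᵥ o = 1) (he : e ⬝ᵥ B *ᵥ e ≠ 0) :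
    2 * (e ⬝ᵥ o) * (e ⬝ᵥ B *ᵥ z) < e ⬝ᵥ B *ᵥ e := by
  set a := e ⬝ᵥ o
  have hv : a • z - e ≠ 0 := by
    intro h
    rw [sub_eq_zero] at h
    apply he
    simp [← h, mulVec_smul, hz]
  have h := hpd (a • z - e) (by simp [sub_dotProduct, smul_dotProduct, hzo, a]) hv
  have hexp : (a • z - e) ⬝ᵥ B *ᵥ (a • z - e) = e ⬝ᵥ B *ᵥ e - 2 * a * (e ⬝ᵥ B *ᵥ z) := by
    simp only [mulVec_sub, mulVec_smul, sub_dotProduct, dotProduct_sub, smul_dotProduct,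
      dotProduct_smul, smul_eq_mul, hz, hB.dotProduct_mulVec_comm_s7 z e]
    ring
  linarith

def reflection (B : Matrix ι ι ℝ) (α z : ι → ℝ) : ι → ℝ :=
  z - (2 * (α ⬝ᵥ B *ᵥ z)) • α

noncomputable def normalizedReflection (B : Matrix ι ι ℝ) (o α z : ι → ℝ) : ι → ℝ :=
  (reflection B α z ⬝ᵥ o)⁻¹ • reflection B α z

variable {α : ι → ℝ}

lemma reflection_dotProduct (z : ι → ℝ) :
    reflection B α z ⬝ᵥ o = z ⬝ᵥ o - 2 * (α ⬝ᵥ B *ᵥ z) * (α ⬝ᵥ o) := by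
  simp only [reflection, sub_dotProduct, smul_dotProduct, smul_eq_mul, mul_assoc]

lemma reflection_dotProduct_mulVec_reflection (hB : B.IsSymm) (hα : α ⬝ᵥ B *ᵥ α = 1)
    (x y : ι → ℝ) : reflection B α x ⬝ᵥ B *ᵥ reflection B α y = x ⬝ᵥ B *ᵥ y := by
  simp only [reflection, mulVec_sub, mulVec_smul, sub_dotProduct, dotProduct_sub,
    smul_dotProduct, dotProduct_smul, smul_eq_mul, hα, hB.dotProduct_mulVec_comm_s7 x α]
  ring

lemma normalizedReflection_dotProduct_mulVec (hB : B.IsSymm) (hα : α ⬝ᵥ B *ᵥ α = 1)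
    (x y : ι → ℝ) :
    normalizedReflection B o α x ⬝ᵥ B *ᵥ normalizedReflection B o α y =
      x ⬝ᵥ B *ᵥ y / ((reflection B α x ⬝ᵥ o) * (reflection B α y ⬝ᵥ o)) := by
  simp only [normalizedReflection, mulVec_smul, smul_dotProduct, dotProduct_smul, smul_eq_mul,
    reflection_dotProduct_mulVec_reflection hB hα, div_eq_mul_inv, mul_inv]
  ring

lemma reflection_dotProduct_pos (hB : B.IsSymm)
    (hpd : ∀ v, v ⬝ᵥ o = 0 → v ≠ 0 → 0 < v ⬝ᵥ B *ᵥ v) (hα : α ⬝ᵥ B *ᵥ α = 1) {z : ι → ℝ}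
    (hz : z ⬝ᵥ B *ᵥ z = 0) (hzo : z ⬝ᵥ o = 1) : 0 < reflection B α z ⬝ᵥ o := by
  have h := two_mul_dotProduct_mulVec_lt_of_isotropic hB hpd hz hzo (hα ▸ one_ne_zero)
  rw [reflection_dotProduct, hzo]
  linarith

theorem abs_dotProduct_mulVec_le_normalizedReflection (hB : B.IsSymm)
    (hpd : ∀ v, v ⬝ᵥ o = 0 → v ≠ 0 → 0 < v ⬝ᵥ B *ᵥ v) (hα : α ⬝ᵥ B *ᵥ α = 1)
    (hαo : 0 < α ⬝ᵥ o) {x y : ι → ℝ} (hx : x ⬝ᵥ B *ᵥ x = 0) (hxo : x ⬝ᵥ o = 1)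
    (hy : y ⬝ᵥ B *ᵥ y = 0) (hyo : y ⬝ᵥ o = 1) (hαx : 0 ≤ α ⬝ᵥ B *ᵥ x)
    (hαy : 0 ≤ α ⬝ᵥ B *ᵥ y) :
    |x ⬝ᵥ B *ᵥ y| ≤ |normalizedReflection B o α x ⬝ᵥ B *ᵥ normalizedReflection B o α y| ∧
      (x ≠ y → (0 < α ⬝ᵥ B *ᵥ x ∨ 0 < α ⬝ᵥ B *ᵥ y) →
        |x ⬝ᵥ B *ᵥ y| < |normalizedReflection B o α x ⬝ᵥ B *ᵥ normalizedReflection B o α y|) := by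
  have hp := reflection_dotProduct_pos hB hpd hα hx hxo
  have hq := reflection_dotProduct_pos hB hpd hα hy hyo
  set p := reflection B α x ⬝ᵥ o with hp_def
  set q := reflection B α y ⬝ᵥ o with hq_def
  have hp1 : p = 1 - 2 * (α ⬝ᵥ B *ᵥ x) * (α ⬝ᵥ o) := by rw [hp_def, reflection_dotProduct, hxo]
  have hq1 : q = 1 - 2 * (α ⬝ᵥ B *ᵥ y) * (α ⬝ᵥ o) := by rw [hq_def, reflection_dotProduct, hyo]
  rw [normalizedReflection_dotProduct_mulVec hB hα, abs_div, abs_of_pos (mul_pos hp hq)]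
  refine ⟨le_div_self (abs_nonneg _) (mul_pos hp hq) ?_, fun hne hαxy => ?_⟩
  · exact mul_le_one₀ (by nlinarith) hq.le (by nlinarith)
  · have hpq : p * q < 1 := by
      rcases hαxy with h | h
      · exact mul_lt_one_of_nonneg_of_lt_one_left hp.le (by nlinarith) (by nlinarith)
      · exact mul_lt_one_of_nonneg_of_lt_one_right (by nlinarith) hq.le (by nlinarith)
    rw [lt_div_iff₀ (mul_pos hp hq)]
    exact mul_lt_of_lt_one_right
      (abs_pos.mpr (dotProduct_mulVec_neg_of_isotropic hB hpd hx hy (hxo.trans hyo.symm) hne).ne)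
      hpq

end Lorentzian

theorem stmt7_general (n : ℕ) (B : Matrix (Fin n) (Fin n) ℝ) (hB : B.IsHermitian)
    (hdiag : ∀ i, B i i = 1)
    (hneg : (Finset.univ.filter (fun i => hB.eigenvalues i < 0)).card = 1)
    (hpos : (Finset.univ.filter (fun i => 0 < hB.eigenvalues i)).card = n - 1)
    (o : Fin n → ℝ) (μ : ℝ) (hμ : μ < 0) (ho : B.mulVec o = μ • o)
    (honorm : o ⬝ᵥ o = 1) (hopos : ∀ i, 0 < o i)
    (i : Fin n) (x y : Fin n → ℝ)
    (hxQ : x ⬝ᵥ B.mulVec x = 0) (hx1 : x ⬝ᵥ o = 1)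
    (hyQ : y ⬝ᵥ B.mulVec y = 0) (hy1 : y ⬝ᵥ o = 1)
    (hxy : x ≠ y)
    (hx : 0 ≤ B.mulVec x i) (hy : 0 ≤ B.mulVec y i) :
    let sx := x - (2 * B.mulVec x i) • (Pi.single i (1:ℝ) : Fin n → ℝ)
    let sy := y - (2 * B.mulVec y i) • (Pi.single i (1:ℝ) : Fin n → ℝ)
    let nx := (sx ⬝ᵥ o)⁻¹ • sx
    let ny := (sy ⬝ᵥ o)⁻¹ • sy
    |x ⬝ᵥ B.mulVec y| ≤ |nx ⬝ᵥ B.mulVec ny| ∧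
    ((0 < B.mulVec x i ∨ 0 < B.mulVec y i) →
      |x ⬝ᵥ B.mulVec y| < |nx ⬝ᵥ B.mulVec ny|) := by
  obtain ⟨j₀, hj₀⟩ := exists_forall_ne_pos_of_card_filter hB.eigenvalues hneg (by simpa using hpos)
  have ho0 : o ≠ 0 := by rintro rfl; simp at honorm
  have hpd : ∀ v, v ⬝ᵥ o = 0 → v ≠ 0 → 0 < v ⬝ᵥ B *ᵥ v := fun v hvo hv =>
    hB.dotProduct_mulVec_pos_of_dotProduct_eq_zero hj₀ hμ.le ho ho0 hvo hv
  have hαB (z : Fin n → ℝ) : Pi.single i 1 ⬝ᵥ B *ᵥ z = (B *ᵥ z) i := single_one_dotProduct i _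
  have key := abs_dotProduct_mulVec_le_normalizedReflection (isHermitian_iff_isSymm.mp hB) hpd
    (by rw [hαB, mulVec_single_one]; exact hdiag i) (by simpa using hopos i)
    hxQ hx1 hyQ hy1 ((hαB x).symm ▸ hx) ((hαB y).symm ▸ hy)
  simp only [normalizedReflection, reflection, hαB] at key
  exact ⟨key.1, key.2 hxy⟩

/-- For distinct `x, y` in the visible area `V_α = {z ∈ Q̂ : B(α,z) ≥ 0}`
of a simple root `α = eᵢ`, the normalized reflection does not decrease `|B(·,·)|`:
`|B(s_α·x, s_α·y)| ≥ |B(x,y)|`, strictly whenever `B(α,x) > 0` or `B(α,y) > 0`. -/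
theorem stmt7 (n : ℕ) (B : Matrix (Fin n) (Fin n) ℝ) (hB : B.IsHermitian)
    (hdiag : ∀ i, B i i = 1)
    (hoff : ∀ i j, i ≠ j → B i j ≤ 0)
    (hneg : (Finset.univ.filter (fun i => hB.eigenvalues i < 0)).card = 1)
    (hpos : (Finset.univ.filter (fun i => 0 < hB.eigenvalues i)).card = n - 1)
    (o : Fin n → ℝ) (μ : ℝ) (hμ : μ < 0) (ho : B.mulVec o = μ • o)
    (honorm : o ⬝ᵥ o = 1) (hopos : ∀ i, 0 < o i)
    (i : Fin n) (x y : Fin n → ℝ)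
    (hxQ : x ⬝ᵥ B.mulVec x = 0) (hx1 : x ⬝ᵥ o = 1)
    (hyQ : y ⬝ᵥ B.mulVec y = 0) (hy1 : y ⬝ᵥ o = 1)
    (hxy : x ≠ y)
    (hx : 0 ≤ B.mulVec x i) (hy : 0 ≤ B.mulVec y i) :
    let sx := x - (2 * B.mulVec x i) • (Pi.single i (1:ℝ) : Fin n → ℝ)
    let sy := y - (2 * B.mulVec y i) • (Pi.single i (1:ℝ) : Fin n → ℝ)
    let nx := (sx ⬝ᵥ o)⁻¹ • sx
    let ny := (sy ⬝ᵥ o)⁻¹ • sy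
    |x ⬝ᵥ B.mulVec y| ≤ |nx ⬝ᵥ B.mulVec ny| ∧
    ((0 < B.mulVec x i ∨ 0 < B.mulVec y i) →
      |x ⬝ᵥ B.mulVec y| < |nx ⬝ᵥ B.mulVec ny|) :=
  stmt7_general n B hB hdiag hneg hpos o μ hμ ho honorm hopos i x y hxQ hx1 hyQ hy1 hxy hx hy
end

section
/- Let a, b, c be positive reals each in {cos(π/k) : k ∈ ℤ, k > 2} ∪ [1,∞), and let B be the 4×4 symmetric matrix with diagonal 1 and off-diagonal entries B₁₂ = −a, B₂₃ = −b, B₃₄ = −c, B₁₃ = B₁₄ = B₂₄ = 0. Then B has signature (2,2) if and only if B is not positive semidefinite and a² + b² + c² − a²c² < 1. -/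
open Matrix

/-!
The eigenvalues of `B` are real, with product `det B = 1 - (a² + b² + c² - a²c²)` and sum
`trace B = 4`. A product of nonzero reals is positive exactly when an even number of factors is
negative. If `det B > 0`, the number of negative eigenvalues is therefore even; it is not `4`
because the trace is positive, and it is not `0` unless `B` is positive semidefinite.
-/

namespace Finset

variable {ι : Type*} (s : Finset ι) (f : ι → ℝ)

theorem prod_eq_neg_one_pow_card_filter_neg_mul_prod_abs :
    ∏ i ∈ s, f i = (-1) ^ #(s.filter (f · < 0)) * ∏ i ∈ s, |f i| := by
  calc ∏ i ∈ s, f i = ∏ i ∈ s, (if f i < 0 then -1 else 1) * |f i| := by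
        refine prod_congr rfl fun i _ ↦ ?_
        split_ifs with h
        · rw [abs_of_neg h, neg_one_mul, neg_neg]
        · rw [abs_of_nonneg (not_lt.mp h), one_mul]
    _ = _ := by rw [prod_mul_distrib, prod_ite, prod_const_one, mul_one, prod_const]

variable {s f}

theorem prod_pos_iff_even_card_filter_neg (hf : ∀ i ∈ s, f i ≠ 0) :
    0 < ∏ i ∈ s, f i ↔ Even #(s.filter (f · < 0)) := by
  have habs : 0 < ∏ i ∈ s, |f i| := prod_pos fun i hi ↦ abs_pos.mpr (hf i hi)
  rw [prod_eq_neg_one_pow_card_filter_neg_mul_prod_abs, mul_pos_iff_of_pos_right habs]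
  rcases Nat.even_or_odd #(s.filter (f · < 0)) with h | h
  · simp [h.neg_one_pow, h]
  · simp [h.neg_one_pow, Nat.not_even_iff_odd.mpr h]

theorem card_filter_neg_add_card_filter_pos :
    #(s.filter (f · < 0)) + #(s.filter (0 < f ·)) = #s ↔ ∀ i ∈ s, f i ≠ 0 := by
  classical
  rw [← card_union_of_disjoint (disjoint_filter.mpr fun i _ h h' ↦ (h.trans h').false),
    ← filter_or, card_filter_eq_iff]
  simp only [ne_iff_lt_or_gt]

end Finset

open Finset in
theorem Matrix.IsHermitian.signature_eq_two_two_iff {n : Type*} [Fintype n] [DecidableEq n]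
    {A : Matrix n n ℝ} (hA : A.IsHermitian) (hn : Fintype.card n = 4) (htr : 0 < A.trace) :
    (#(univ.filter (hA.eigenvalues · < 0)) = 2 ∧ #(univ.filter (0 < hA.eigenvalues ·)) = 2) ↔
      ¬A.PosSemidef ∧ 0 < A.det := by
  have hdet : A.det = ∏ i, hA.eigenvalues i := by simpa using hA.det_eq_prod_eigenvalues
  have hpsd : A.PosSemidef ↔ #(univ.filter (hA.eigenvalues · < 0)) = 0 := by
    simp [hA.posSemidef_iff_eigenvalues_nonneg, filter_eq_empty_iff, Pi.le_def]
  constructor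
  · rintro ⟨hneg, hpos⟩
    have hne := card_filter_neg_add_card_filter_pos.mp (by rw [hneg, hpos, card_univ, hn])
    refine ⟨by rw [hpsd, hneg]; decide, ?_⟩
    rw [hdet, prod_pos_iff_even_card_filter_neg hne, hneg]
    exact even_two
  · rintro ⟨hnpsd, hdet_pos⟩
    rw [hdet] at hdet_pos
    have hne : ∀ i ∈ univ, hA.eigenvalues i ≠ 0 := prod_ne_zero_iff.mp hdet_pos.ne'
    obtain ⟨k, hk⟩ := (prod_pos_iff_even_card_filter_neg hne).mp hdet_pos
    have hcard := card_filter_neg_add_card_filter_pos.mpr hne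
    obtain ⟨i, -, hi⟩ : ∃ i ∈ univ, (0 : ℝ) < hA.eigenvalues i := by
      refine exists_lt_of_sum_lt ?_
      simpa [hA.trace_eq_sum_eigenvalues] using htr
    have hlt : #(univ.filter (hA.eigenvalues · < 0)) < #(univ : Finset n) :=
      card_lt_card (filter_ssubset.mpr ⟨i, mem_univ i, hi.le.not_gt⟩)
    rw [card_univ, hn] at hcard hlt
    have hneg_ne := mt hpsd.mpr hnpsd
    omega

theorem Matrix.det_pathGram_four (a b c : ℝ) :
    det !![1, -a, 0, 0; -a, 1, -b, 0; 0, -b, 1, -c; 0, 0, -c, 1] =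
      1 - (a ^ 2 + b ^ 2 + c ^ 2 - a ^ 2 * c ^ 2) := by
  simp [det_succ_row_zero, Fin.sum_univ_succ, Fin.succAbove]
  ring

theorem stmt10_general (a b c : ℝ)
    (B : Matrix (Fin 4) (Fin 4) ℝ)
    (hBdef : B = !![1, -a, 0, 0; -a, 1, -b, 0; 0, -b, 1, -c; 0, 0, -c, 1])
    (hB : B.IsHermitian) :
    ((Finset.univ.filter (fun i => hB.eigenvalues i < 0)).card = 2 ∧
     (Finset.univ.filter (fun i => 0 < hB.eigenvalues i)).card = 2) ↔
    (¬ B.PosSemidef ∧ a ^ 2 + b ^ 2 + c ^ 2 - a ^ 2 * c ^ 2 < 1) := by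
  subst hBdef
  have htr : 0 < trace !![1, -a, 0, 0; -a, 1, -b, 0; 0, -b, 1, -c; 0, 0, -c, 1] := by
    norm_num [trace, Fin.sum_univ_succ]
  rw [hB.signature_eq_two_two_iff (Fintype.card_fin 4) htr, det_pathGram_four, sub_pos]

/-- For positive reals `a, b, c`, each in `{cos(π/k) : k > 2} ∪ [1,∞)`,
the 4×4 path-shaped Coxeter Gram matrix has signature `(2,2)` iff it is not positive
semidefinite and `a² + b² + c² - a²c² < 1`. -/
theorem stmt10 (a b c : ℝ)
    (ha0 : 0 < a) (hb0 : 0 < b) (hc0 : 0 < c)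
    (ha : (∃ k : ℕ, 2 < k ∧ a = Real.cos (Real.pi / k)) ∨ 1 ≤ a)
    (hb : (∃ k : ℕ, 2 < k ∧ b = Real.cos (Real.pi / k)) ∨ 1 ≤ b)
    (hc : (∃ k : ℕ, 2 < k ∧ c = Real.cos (Real.pi / k)) ∨ 1 ≤ c)
    (B : Matrix (Fin 4) (Fin 4) ℝ)
    (hBdef : B = !![1, -a, 0, 0; -a, 1, -b, 0; 0, -b, 1, -c; 0, 0, -c, 1])
    (hB : B.IsHermitian) :
    ((Finset.univ.filter (fun i => hB.eigenvalues i < 0)).card = 2 ∧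
     (Finset.univ.filter (fun i => 0 < hB.eigenvalues i)).card = 2) ↔
    (¬ B.PosSemidef ∧ a ^ 2 + b ^ 2 + c ^ 2 - a ^ 2 * c ^ 2 < 1) :=
  stmt10_general a b c B hBdef hB
end

section
/- Rank-2 classification: let α, β be linearly independent vectors with B(α,α) = B(β,β) = 1, acting by B-reflections s_α, s_β, and let E be the set of accumulation points of normalized roots of the group W = ⟨s_α, s_β⟩. Then: if B(α,β) > −1, E is empty; if B(α,β) = −1, E consists of exactly one point, namely the normalization of α + β; if B(α,β) < −1, E consists of exactly two points, the two normalized isotropic points on the line through α̂ and β̂. -/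
/-!
With `c = -B(α, β)`, the reflections act on the coefficients of `x α + y β` through the
three-term recurrence of the Chebyshev polynomials `Uₙ`, so the roots are exactly
`±(Uₙ(c) α + Uₙ₋₁(c) β)` for `n ∈ ℤ` and the normalized roots form one sequence indexed by `ℤ`.
Its behaviour is read off the closed forms of `Uₙ`:
* `c = cos (π / k)`: the sequence is `2k`-periodic, so there are finitely many roots;
* `c = 1`: `Uₙ(1) = n + 1`, and both ends converge to the normalization of `α + β`;
* `c = cosh θ`, `θ > 0`: `Uₙ(c) sinh θ = sinh ((n + 1) θ)`, and the two ends converge to the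
  normalizations of `e^{±θ} α + β`, the two isotropic points of the line `f = 1`.

A sequence in a Hausdorff space that converges at both ends and never hits its limits
accumulates exactly at them; the limits here are isotropic, while every root `ρ` has
`B(ρ, ρ) = 1`.
-/

open Polynomial Polynomial.Chebyshev Real Filter Topology Set

lemma Function.Periodic.finite_range_of_int {X : Type*} {g : ℤ → X} {T : ℤ}
    (hg : Function.Periodic g T) (hT : 0 < T) : (range g).Finite := by
  refine ((finite_Ico 0 T).image g).subset ?_
  rintro _ ⟨n, rfl⟩
  refine ⟨n % T, ⟨Int.emod_nonneg n hT.ne', Int.emod_lt_of_pos n hT⟩, ?_⟩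
  rw [Int.emod_def, mul_comm, ← smul_eq_mul, hg.sub_zsmul_eq]

section AccPt

variable {ι X : Type*} [TopologicalSpace X]

lemma accPt_range_of_tendsto {l : Filter ι} [l.NeBot] {g : ι → X} {p : X}
    (hg : Tendsto g l (𝓝 p)) (hne : ∀ i, g i ≠ p) : AccPt p (𝓟 (range g)) := by
  rw [accPt_principal_iff_nhdsWithin]
  exact (tendsto_nhdsWithin_iff.2
    ⟨hg, .of_forall fun i => (⟨mem_range_self i, hne i⟩ : g i ∈ range g \ {p})⟩).neBot

lemma eq_or_eq_of_accPt_range [T2Space X] {g : ι → X} {p q x : X}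
    (hg : Tendsto g cofinite (𝓝 p ⊔ 𝓝 q)) (hx : AccPt x (𝓟 (range g))) : x = p ∨ x = q := by
  by_contra! h
  obtain ⟨U, hU, W, hW, hUW⟩ := Filter.disjoint_iff.1 <|
    disjoint_sup_right.2 ⟨disjoint_nhds_nhds.2 h.1, disjoint_nhds_nhds.2 h.2⟩
  refine Set.Infinite.of_accPt (hx.nhds_inter hU) (((hg hW).image g).subset ?_)
  rintro _ ⟨hyU, n, rfl⟩
  exact ⟨n, fun hn => Set.disjoint_left.1 hUW hyU hn, rfl⟩

lemma derivedSet_range_eq_pair [T2Space X] {g : ℤ → X} {p q : X}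
    (hp : Tendsto g atTop (𝓝 p)) (hq : Tendsto g atBot (𝓝 q))
    (hgp : ∀ n, g n ≠ p) (hgq : ∀ n, g n ≠ q) : derivedSet (range g) = {p, q} := by
  refine subset_antisymm (fun x hx => ?_) ?_
  · exact (eq_or_eq_of_accPt_range (Int.cofinite_eq ▸ hq.sup_sup hp) hx).symm
  · rintro _ (rfl | rfl)
    exacts [accPt_range_of_tendsto hp hgp, accPt_range_of_tendsto hq hgq]

lemma derivedSet_eq_empty_of_finite [T1Space X] {s : Set X} (hs : s.Finite) :
    derivedSet s = ∅ :=
  eq_empty_of_forall_notMem fun _ hx => Set.Infinite.of_accPt hx hs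

end AccPt

namespace Real

lemma sinh_add_eq_exp_mul_sinh_add (x θ : ℝ) :
    sinh (x + θ) = exp θ * sinh x + sinh θ * exp (-x) := by
  rw [sinh_add, ← cosh_add_sinh θ, ← cosh_sub_sinh x]
  ring

lemma tendsto_sinh_add_div_sinh_atTop (θ : ℝ) :
    Tendsto (fun x => sinh (x + θ) / sinh x) atTop (𝓝 (exp θ)) := by
  have hsinh : Tendsto sinh atTop atTop := tendsto_atTop_mono'
    _ ((eventually_ge_atTop 0).mono fun x hx => self_le_sinh_iff.2 hx) tendsto_id
  have hlim := (tendsto_exp_neg_atTop_nhds_zero.div_atTop hsinh).const_mul (sinh θ)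
  rw [mul_zero] at hlim
  have hlim' := hlim.const_add (exp θ)
  rw [add_zero] at hlim'
  refine hlim'.congr' ?_
  filter_upwards [eventually_gt_atTop 0] with x hx
  rw [sinh_add_eq_exp_mul_sinh_add, add_div, mul_div_cancel_right₀ _ (sinh_pos_iff.2 hx).ne',
    mul_div_assoc]

lemma tendsto_sinh_add_div_sinh_atBot (θ : ℝ) :
    Tendsto (fun x => sinh (x + θ) / sinh x) atBot (𝓝 (exp (-θ))) := by
  refine ((tendsto_sinh_add_div_sinh_atTop (-θ)).comp tendsto_neg_atBot_atTop).congr fun x => ?_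
  rw [Function.comp_apply, ← neg_add, sinh_neg, sinh_neg, neg_div_neg_eq]

end Real

namespace Polynomial.Chebyshev

lemma eventually_U_eval_one_sub_one_ne_zero :
    ∀ᶠ n : ℤ in atBot ⊔ atTop, (U ℝ (n - 1)).eval 1 ≠ 0 := by
  filter_upwards [eventually_sup.2 ⟨eventually_ne_atBot 0, eventually_ne_atTop 0⟩] with n hn
  simpa using hn

lemma tendsto_U_eval_one_div :
    Tendsto (fun n : ℤ => (U ℝ n).eval 1 / (U ℝ (n - 1)).eval 1) (atBot ⊔ atTop) (𝓝 1) := by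
  have hinv := tendsto_inv₀_cobounded.comp (tendsto_intCast_atBot_sup_atTop_cobounded (α := ℝ))
  have hlim := hinv.const_add 1
  rw [add_zero] at hlim
  refine hlim.congr' ?_
  filter_upwards [eventually_sup.2 ⟨eventually_ne_atBot 0, eventually_ne_atTop 0⟩] with n hn
  have hn' : (n : ℝ) ≠ 0 := Int.cast_ne_zero.2 hn
  simp only [Function.comp_apply, U_eval_one, Int.cast_sub, Int.cast_one, sub_add_cancel]
  field_simp

lemma U_eval_cosh_sub_one_ne_zero {θ : ℝ} (hθ : θ ≠ 0) {n : ℤ} (hn : n ≠ 0) :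
    (U ℝ (n - 1)).eval (cosh θ) ≠ 0 := by
  intro h
  have h' := U_real_cosh θ (n - 1)
  rw [h, zero_mul, eq_comm, sinh_eq_zero] at h'
  push_cast at h'
  simp_all

lemma U_eval_cosh_div {θ : ℝ} (hθ : θ ≠ 0) (n : ℤ) :
    (U ℝ n).eval (cosh θ) / (U ℝ (n - 1)).eval (cosh θ) = sinh (n * θ + θ) / sinh (n * θ) := by
  rw [← mul_div_mul_right _ _ (sinh_ne_zero.2 hθ), U_real_cosh, U_real_cosh]
  push_cast
  ring_nf

lemma tendsto_U_eval_cosh_div_atTop {θ : ℝ} (hθ : 0 < θ) :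
    Tendsto (fun n : ℤ => (U ℝ n).eval (cosh θ) / (U ℝ (n - 1)).eval (cosh θ)) atTop
      (𝓝 (exp θ)) := by
  simp_rw [U_eval_cosh_div hθ.ne']
  exact (tendsto_sinh_add_div_sinh_atTop θ).comp (tendsto_intCast_atTop_atTop.atTop_mul_const hθ)

lemma tendsto_U_eval_cosh_div_atBot {θ : ℝ} (hθ : 0 < θ) :
    Tendsto (fun n : ℤ => (U ℝ n).eval (cosh θ) / (U ℝ (n - 1)).eval (cosh θ)) atBot
      (𝓝 (exp (-θ))) := by
  simp_rw [U_eval_cosh_div hθ.ne']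
  exact (tendsto_sinh_add_div_sinh_atBot θ).comp
    ((tendsto_intCast_atBot_iff.2 tendsto_id).atBot_mul_const hθ)

lemma U_eval_cos_pi_div_periodic {k : ℕ} (hk : 1 < k) :
    Function.Periodic (fun n : ℤ => (U ℝ n).eval (cos (π / k))) (2 * k) := by
  have hk0 : (0 : ℝ) < k := by positivity
  have hsin : sin (π / k) ≠ 0 :=
    (sin_pos_of_pos_of_lt_pi (by positivity) (div_lt_self pi_pos (by exact_mod_cast hk))).ne'
  intro n
  refine mul_right_cancel₀ hsin ?_
  have hshift : (((n + 2 * k : ℤ) : ℝ) + 1) * (π / k) = ((n : ℝ) + 1) * (π / k) + 2 * π := by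
    push_cast
    field_simp
    ring
  simp only [U_real_cos, hshift, sin_add_two_pi]

end Polynomial.Chebyshev

namespace RankTwoRoots

section Roots

variable {V : Type*} [AddCommGroup V] [Module ℝ V]

def reflect (B : V →ₗ[ℝ] V →ₗ[ℝ] ℝ) (α v : V) : V := v - (2 * B α v) • α

def rootSystem (B : V →ₗ[ℝ] V →ₗ[ℝ] ℝ) (α β : V) : Set V :=
  {v | ∀ S : Set V, α ∈ S → β ∈ S → (∀ u ∈ S, reflect B α u ∈ S) →
    (∀ u ∈ S, reflect B β u ∈ S) → v ∈ S}

noncomputable def root (c : ℝ) (α β : V) (n : ℤ) : V :=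
  (U ℝ n).eval c • α + (U ℝ (n - 1)).eval c • β

variable {B : V →ₗ[ℝ] V →ₗ[ℝ] ℝ} {α β : V} {c : ℝ}

lemma reflect_neg (v : V) : reflect B α (-v) = -reflect B α v := by
  simp only [reflect, map_neg, mul_neg, neg_smul, sub_neg_eq_add, neg_sub']

lemma apply_reflect_reflect (hB : ∀ u v, B u v = B v u) (hα : B α α = 1) (v : V) :
    B (reflect B α v) (reflect B α v) = B v v := by
  simp only [reflect, map_sub, map_smul, LinearMap.sub_apply, LinearMap.smul_apply, smul_eq_mul,
    hα, hB v α]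
  ring

lemma apply_self_eq_one_of_mem_rootSystem (hB : ∀ u v, B u v = B v u) (hαα : B α α = 1)
    (hββ : B β β = 1) {v : V} (hv : v ∈ rootSystem B α β) : B v v = 1 :=
  hv {v | B v v = 1} hαα hββ (fun u hu => (apply_reflect_reflect hB hαα u).trans hu)
    (fun u hu => (apply_reflect_reflect hB hββ u).trans hu)

lemma root_zero : root c α β 0 = α := by simp [root]

lemma neg_root_neg_one : -root c α β (-1) = β := by
  simp [root, show (-1 : ℤ) - 1 = -2 by norm_num]

lemma reflect_root_left (hαα : B α α = 1) (hαβ : B α β = -c) (n : ℤ) :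
    reflect B α (root c α β n) = -root c α β (-n) := by
  simp only [reflect, root, map_add, map_smul, smul_eq_mul, hαα, hαβ, U_neg, U_neg_sub_one,
    U_sub_two, eval_neg, eval_sub, eval_mul, eval_X, eval_ofNat]
  module

lemma reflect_root_right (hββ : B β β = 1) (hβα : B β α = -c) (n : ℤ) :
    reflect B β (root c α β n) = -root c α β (-n - 2) := by
  simp only [reflect, root, map_add, map_smul, smul_eq_mul, hββ, hβα,
    show -n - 2 - 1 = -(n + 1) - 2 by ring, U_neg_sub_two, U_add_one, eval_neg, eval_sub,
    eval_mul, eval_X, eval_ofNat]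
  module

lemma rootSystem_eq (hαα : B α α = 1) (hββ : B β β = 1) (hαβ : B α β = -c)
    (hβα : B β α = -c) : rootSystem B α β = range (root c α β) ∪ range (-root c α β) := by
  refine subset_antisymm (fun v hv => ?_) ?_
  · refine hv _ (.inl ⟨0, root_zero⟩) (.inr ⟨-1, neg_root_neg_one⟩) ?_ ?_
    · rintro _ (⟨n, rfl⟩ | ⟨n, rfl⟩)
      · exact .inr ⟨-n, (reflect_root_left hαα hαβ n).symm⟩
      · exact .inl ⟨-n, by simp [reflect_neg, reflect_root_left hαα hαβ]⟩
    · rintro _ (⟨n, rfl⟩ | ⟨n, rfl⟩)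
      · exact .inr ⟨-n - 2, (reflect_root_right hββ hβα n).symm⟩
      · exact .inl ⟨-n - 2, by simp [reflect_neg, reflect_root_right hββ hβα]⟩
  · intro v hv S hα hβ hSα hSβ
    -- `sα` and `sβ` move the pair `(root n, -root (-n - 1))` one step up or down
    have key : ∀ n, root c α β n ∈ S ∧ -root c α β (-n - 1) ∈ S := by
      intro n
      induction n using Int.induction_on with
      | zero => simpa [root_zero, neg_root_neg_one] using And.intro hα hβ
      | succ n ih =>
        constructor
        · convert hSα _ ih.2 using 1
          rw [reflect_neg, reflect_root_left hαα hαβ, neg_neg]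
          ring_nf
        · convert hSβ _ ih.1 using 1
          rw [reflect_root_right hββ hβα]
          ring_nf
      | pred n ih =>
        constructor
        · convert hSβ _ ih.2 using 1
          rw [reflect_neg, reflect_root_right hββ hβα, neg_neg]
          ring_nf
        · convert hSα _ ih.1 using 1
          rw [reflect_root_left hαα hαβ]
          ring_nf
    rcases hv with ⟨n, rfl⟩ | ⟨n, rfl⟩
    · exact (key n).1
    · simpa using (key (-n - 1)).2

lemma apply_root_self (hB : ∀ u v, B u v = B v u) (hαα : B α α = 1) (hββ : B β β = 1)
    (hαβ : B α β = -c) (hβα : B β α = -c) (n : ℤ) : B (root c α β n) (root c α β n) = 1 := by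
  refine apply_self_eq_one_of_mem_rootSystem hB hαα hββ ?_
  rw [rootSystem_eq hαα hββ hαβ hβα]
  exact .inl ⟨n, rfl⟩

lemma root_cos_pi_div_periodic {k : ℕ} (hk : 1 < k) :
    Function.Periodic (root (cos (π / k)) α β) (2 * k) := by
  have hU : ∀ m : ℤ, (U ℝ (m + 2 * k)).eval (cos (π / k)) = (U ℝ m).eval (cos (π / k)) :=
    U_eval_cos_pi_div_periodic hk
  intro n
  rw [root, root, show n + 2 * k - 1 = n - 1 + 2 * k by ring, hU, hU]

lemma apply_smul_add_smul_self (hαα : B α α = 1) (hββ : B β β = 1) (hαβ : B α β = -c)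
    (hβα : B β α = -c) (x y : ℝ) :
    B (x • α + y • β) (x • α + y • β) = x ^ 2 - 2 * c * x * y + y ^ 2 := by
  simp only [map_add, map_smul, LinearMap.add_apply, LinearMap.smul_apply, smul_eq_mul, hαα, hββ,
    hαβ, hβα]
  ring

end Roots

section Normalize

variable {V : Type*} [AddCommGroup V] [Module ℝ V] (f : V →ₗ[ℝ] ℝ)

noncomputable def normalizeBy (v : V) : V := (f v)⁻¹ • v

variable {f}

lemma normalizeBy_smul {a : ℝ} (ha : a ≠ 0) (v : V) : normalizeBy f (a • v) = normalizeBy f v := by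
  rw [normalizeBy, normalizeBy, map_smul, smul_eq_mul, smul_smul, mul_inv, mul_right_comm,
    inv_mul_cancel₀ ha, one_mul]

lemma normalizeBy_neg (v : V) : normalizeBy f (-v) = normalizeBy f v := by
  simpa using normalizeBy_smul (f := f) (a := -1) (by norm_num) v

lemma normalizeBy_of_apply_eq_one {v : V} (hv : f v = 1) : normalizeBy f v = v := by
  simp [normalizeBy, hv]

lemma eq_normalizeBy_of_eq_smul {v w : V} {y : ℝ} (hv : f v = 1) (hvw : v = y • w) :
    v = normalizeBy f w := by
  have hy : y ≠ 0 := by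
    rintro rfl
    simp [hvw] at hv
  rw [← normalizeBy_smul hy, ← hvw, normalizeBy_of_apply_eq_one hv]

variable {B : V →ₗ[ℝ] V →ₗ[ℝ] ℝ}

lemma apply_normalizeBy_self (v : V) :
    B (normalizeBy f v) (normalizeBy f v) = (f v)⁻¹ ^ 2 * B v v := by
  simp only [normalizeBy, map_smul, LinearMap.smul_apply, smul_eq_mul]
  ring

lemma normalizeBy_isotropic {w : V} (hw : B w w = 0) (hfw : f w ≠ 0) :
    B (normalizeBy f w) (normalizeBy f w) = 0 ∧ f (normalizeBy f w) = 1 :=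
  ⟨by rw [apply_normalizeBy_self, hw, mul_zero], by simp [normalizeBy, hfw]⟩

lemma normalizeBy_ne_of_isotropic {v p : V} (hv : B v v = 1) (hp : B p p = 0 ∧ f p = 1) :
    normalizeBy f v ≠ p := by
  rintro rfl
  by_cases h : f v = 0
  · simp [normalizeBy, h] at hp
  · rw [apply_normalizeBy_self, hv] at hp
    simp_all

lemma normalizeBy_image_rootSystem {α β : V} {c : ℝ} (hαα : B α α = 1) (hββ : B β β = 1)
    (hαβ : B α β = -c) (hβα : B β α = -c) :
    normalizeBy f '' rootSystem B α β = range (fun n => normalizeBy f (root c α β n)) := by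
  rw [rootSystem_eq hαα hββ hαβ hβα, image_union, ← range_comp, ← range_comp]
  simp only [Function.comp_def, Pi.neg_apply, normalizeBy_neg, union_self]

variable [TopologicalSpace V] [ContinuousAdd V] [ContinuousSMul ℝ V]

lemma tendsto_normalizeBy_root (hf : Continuous f) {α β : V} (hfα : f α = 1) (hfβ : f β = 1)
    {c r : ℝ} (hr : r + 1 ≠ 0) {l : Filter ℤ} (hne : ∀ᶠ n in l, (U ℝ (n - 1)).eval c ≠ 0)
    (hlim : Tendsto (fun n => (U ℝ n).eval c / (U ℝ (n - 1)).eval c) l (𝓝 r)) :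
    Tendsto (fun n => normalizeBy f (root c α β n)) l (𝓝 (normalizeBy f (r • α + β))) := by
  have hcont : ContinuousAt (normalizeBy f) (r • α + β) :=
    (hf.continuousAt.inv₀ (by simpa [hfα, hfβ] using hr)).smul continuousAt_id
  refine (hcont.tendsto.comp ((hlim.smul_const α).add_const β)).congr' ?_
  filter_upwards [hne] with n hn
  rw [Function.comp_apply, ← normalizeBy_smul hn, smul_add, smul_smul, mul_div_cancel₀ _ hn, root]

end Normalize

section Hyperbolic

variable {V : Type*} [AddCommGroup V] [Module ℝ V] {B : V →ₗ[ℝ] V →ₗ[ℝ] ℝ} {f : V →ₗ[ℝ] ℝ}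
  {α β : V} {θ : ℝ}

lemma normalizeBy_exp_smul_add_isotropic (hαα : B α α = 1) (hββ : B β β = 1)
    (hαβ : B α β = -cosh θ) (hβα : B β α = -cosh θ) (hfα : f α = 1) (hfβ : f β = 1) :
    B (normalizeBy f (exp θ • α + β)) (normalizeBy f (exp θ • α + β)) = 0 ∧
      f (normalizeBy f (exp θ • α + β)) = 1 := by
  refine normalizeBy_isotropic ?_ (by simp [hfα, hfβ]; positivity)
  rw [← one_smul ℝ β, apply_smul_add_smul_self hαα hββ hαβ hβα, cosh_eq, exp_neg]
  field_simp
  ring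

lemma setOf_isotropic_eq_pair (hspan : Submodule.span ℝ {α, β} = ⊤) (hαα : B α α = 1)
    (hββ : B β β = 1) (hαβ : B α β = -cosh θ) (hβα : B β α = -cosh θ) (hfα : f α = 1)
    (hfβ : f β = 1) : {v | B v v = 0 ∧ f v = 1} =
      {normalizeBy f (exp θ • α + β), normalizeBy f (exp (-θ) • α + β)} := by
  ext v
  constructor
  · rintro ⟨hBv, hfv⟩
    obtain ⟨x, y, rfl⟩ := Submodule.mem_span_pair.1 (hspan ▸ Submodule.mem_top : v ∈ _)
    rw [apply_smul_add_smul_self hαα hββ hαβ hβα] at hBv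
    have hfactor : (x - exp θ * y) * (x - exp (-θ) * y) = 0 := by
      rw [← hBv, cosh_eq, exp_neg]
      field_simp
      ring
    rcases mul_eq_zero.1 hfactor with h | h
    · exact .inl (eq_normalizeBy_of_eq_smul (y := y) hfv (by rw [sub_eq_zero.1 h]; module))
    · exact .inr (eq_normalizeBy_of_eq_smul (y := y) hfv (by rw [sub_eq_zero.1 h]; module))
  · rintro (rfl | rfl)
    · exact normalizeBy_exp_smul_add_isotropic hαα hββ hαβ hβα hfα hfβ
    · rw [← cosh_neg] at hαβ hβα
      exact normalizeBy_exp_smul_add_isotropic hαα hββ hαβ hβα hfα hfβ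

lemma normalizeBy_exp_smul_add_ne (hind : LinearIndependent ℝ ![α, β]) (hfα : f α = 1)
    (hfβ : f β = 1) (hθ : θ ≠ 0) :
    normalizeBy f (exp θ • α + β) ≠ normalizeBy f (exp (-θ) • α + β) := by
  intro h
  simp only [normalizeBy, map_add, map_smul, hfα, hfβ, smul_eq_mul, mul_one, smul_add,
    smul_smul] at h
  have hβ := inv_injective (hind.eq_of_pair h).2
  rw [add_left_inj, exp_eq_exp] at hβ
  exact hθ (by linarith)

end Hyperbolic

section AccumulationPoints

variable {V : Type*} [AddCommGroup V] [Module ℝ V] [TopologicalSpace V] [ContinuousAdd V]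
  [ContinuousSMul ℝ V] [T2Space V] {B : V →ₗ[ℝ] V →ₗ[ℝ] ℝ} {f : V →ₗ[ℝ] ℝ} {α β : V}

lemma derivedSet_range_normalizeBy_root_one (hf : Continuous f) (hfα : f α = 1) (hfβ : f β = 1)
    (hB : ∀ u v, B u v = B v u) (hαα : B α α = 1) (hββ : B β β = 1) (hαβ : B α β = -1)
    (hβα : B β α = -1) :
    derivedSet (range fun n => normalizeBy f (root 1 α β n)) = {(2 : ℝ)⁻¹ • (α + β)} := by
  have hp := normalizeBy_exp_smul_add_isotropic (f := f) (θ := 0) hαα hββ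
    (by rwa [cosh_zero]) (by rwa [cosh_zero]) hfα hfβ
  have hne n := normalizeBy_ne_of_isotropic (apply_root_self hB hαα hββ hαβ hβα n) hp
  have hlim := tendsto_normalizeBy_root hf hfα hfβ (by norm_num)
    eventually_U_eval_one_sub_one_ne_zero tendsto_U_eval_one_div
  rw [exp_zero] at hne
  rw [← pair_eq_singleton, derivedSet_range_eq_pair (hlim.mono_left le_sup_right)
    (hlim.mono_left le_sup_left) hne hne, normalizeBy]
  simp [hfα, hfβ]
  norm_num

lemma derivedSet_range_normalizeBy_root_cosh (hf : Continuous f) (hfα : f α = 1)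
    (hfβ : f β = 1) (hB : ∀ u v, B u v = B v u) (hαα : B α α = 1) (hββ : B β β = 1) {θ : ℝ}
    (hθ : 0 < θ) (hαβ : B α β = -cosh θ) (hβα : B β α = -cosh θ) :
    derivedSet (range fun n => normalizeBy f (root (cosh θ) α β n)) =
      {normalizeBy f (exp θ • α + β), normalizeBy f (exp (-θ) • α + β)} := by
  have hroot := apply_root_self hB hαα hββ hαβ hβα
  have hP := normalizeBy_exp_smul_add_isotropic hαα hββ hαβ hβα hfα hfβ
  rw [← cosh_neg] at hαβ hβα
  have hQ := normalizeBy_exp_smul_add_isotropic hαα hββ hαβ hβα hfα hfβ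
  refine derivedSet_range_eq_pair ?_ ?_ (fun n => normalizeBy_ne_of_isotropic (hroot n) hP)
    (fun n => normalizeBy_ne_of_isotropic (hroot n) hQ)
  · exact tendsto_normalizeBy_root hf hfα hfβ (by positivity)
      ((eventually_ne_atTop 0).mono fun n hn => U_eval_cosh_sub_one_ne_zero hθ.ne' hn)
      (tendsto_U_eval_cosh_div_atTop hθ)
  · exact tendsto_normalizeBy_root hf hfα hfβ (by positivity)
      ((eventually_ne_atBot 0).mono fun n hn => U_eval_cosh_sub_one_ne_zero hθ.ne' hn)
      (tendsto_U_eval_cosh_div_atBot hθ)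

end AccumulationPoints

end RankTwoRoots

open RankTwoRoots

/-- Rank-2 classification of accumulation points of normalized roots:
with `b = B(α,β)`, if `b > -1` then `E = ∅`; if `b = -1` then `E` is the single point
`(α+β)/2`; if `b < -1` then `E` consists of exactly two points, the normalized isotropic
points on the line through `α̂` and `β̂` (the line `{v : f v = 1}`). -/
theorem stmt15 (α β : Fin 2 → ℝ) (hind : LinearIndependent ℝ ![α, β])
    (Bf : (Fin 2 → ℝ) →ₗ[ℝ] (Fin 2 → ℝ) →ₗ[ℝ] ℝ)
    (hsymm : ∀ u v, Bf u v = Bf v u)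
    (hαα : Bf α α = 1) (hββ : Bf β β = 1)
    (b : ℝ) (hb : Bf α β = b)
    (hbval : b ≤ -1 ∨ ∃ k : ℕ, 1 < k ∧ b = -Real.cos (Real.pi / k))
    (f : (Fin 2 → ℝ) →ₗ[ℝ] ℝ) (hfα : f α = 1) (hfβ : f β = 1) :
    let sA : (Fin 2 → ℝ) → (Fin 2 → ℝ) := fun v => v - (2 * Bf α v) • α
    let sB : (Fin 2 → ℝ) → (Fin 2 → ℝ) := fun v => v - (2 * Bf β v) • β
    let Φ : Set (Fin 2 → ℝ) := {v | ∀ S : Set (Fin 2 → ℝ),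
      α ∈ S → β ∈ S → (∀ u ∈ S, sA u ∈ S) → (∀ u ∈ S, sB u ∈ S) → v ∈ S}
    let N : Set (Fin 2 → ℝ) := (fun ρ => (f ρ)⁻¹ • ρ) '' Φ
    let E : Set (Fin 2 → ℝ) := {p | AccPt p (Filter.principal N)}
    (-1 < b → E = ∅) ∧
    (b = -1 → E = {(2:ℝ)⁻¹ • (α + β)}) ∧
    (b < -1 → (E = {v | Bf v v = 0 ∧ f v = 1} ∧
      ∃ p q : Fin 2 → ℝ, p ≠ q ∧ E = {p, q})) := by
  intro sA sB Φ N E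
  obtain ⟨c, hc⟩ : ∃ c, c = -b := ⟨_, rfl⟩
  have hαβ : Bf α β = -c := by rw [hc, neg_neg, hb]
  have hβα : Bf β α = -c := by rw [hsymm, hαβ]
  have hE : E = derivedSet (range fun n => normalizeBy f (root c α β n)) := by
    rw [← normalizeBy_image_rootSystem hαα hββ hαβ hβα]
    rfl
  have hf : Continuous f := f.continuous_of_finiteDimensional
  refine ⟨fun hgt => ?_, fun hb1 => ?_, fun hlt => ?_⟩
  · obtain ⟨k, hk, rfl⟩ := hbval.resolve_left (not_le.2 hgt)
    obtain rfl : c = cos (π / k) := by rw [hc, neg_neg]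
    rw [hE]
    exact derivedSet_eq_empty_of_finite
      (((root_cos_pi_div_periodic hk).comp (normalizeBy f)).finite_range_of_int (by positivity))
  · obtain rfl : c = 1 := by rw [hc, hb1, neg_neg]
    rw [hE, derivedSet_range_normalizeBy_root_one hf hfα hfβ hsymm hαα hββ hαβ hβα]
  · have hθ : 0 < arcosh (-b) := arcosh_pos (by linarith)
    obtain rfl : c = cosh (arcosh (-b)) := by rw [hc, cosh_arcosh (by linarith)]
    have hspan : Submodule.span ℝ {α, β} = ⊤ := by
      rw [pair_comm]
      simpa using hind.span_eq_top_of_card_eq_finrank' (by simp)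
    rw [hE, derivedSet_range_normalizeBy_root_cosh hf hfα hfβ hsymm hαα hββ hθ hαβ hβα,
      setOf_isotropic_eq_pair hspan hαα hββ hαβ hβα hfα hfβ]
    exact ⟨rfl, _, _, normalizeBy_exp_smul_add_ne hind hfα hfβ hθ.ne', rfl⟩
end

section
/- Let w preserve B (signature (n−1,1)) and suppose w has an eigenvector p ∈ Q̂ with eigenvalue λ and an eigenvector p' ∈ Q̂ with eigenvalue λ', p̂ ≠ p̂', and |λ| < 1. If (w^{nᵢ}·x) is a subsequence of normalized iterates converging to some y ∈ Q̂, then ||w^{nᵢ}(x)|₁| → ∞ and |B(w^{nᵢ}·x, p')| → 0, so y = p' (the eigenvector with eigenvalue λ' = 1/λ of modulus > 1). -/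
/-!
Since `B` has a single negative direction `o`, it is positive definite on `o^⊥`; hence two isotropic
vectors with the same `o`-component are `B`-orthogonal only if they are equal. So `B(x,p) ≠ 0` and
`B(p,p') ≠ 0`, and invariance of `B` gives `l * l' = 1`. Along the iterates
`B(wᵏx, p) = l⁻ᵏ B(x,p)` and `B(wᵏx, p') = lᵏ B(x,p')`. After normalising by `aₖ = wᵏx ⬝ᵥ o`,
the first quantity converges (to `B(y,p)`) while `l⁻ᵏ → ∞`, which forces `|aₖ| → ∞`; the second
then tends to `0`, so `B(y,p') = 0` and `y = p'`.
-/

open Matrix Filter Topology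

section Signature

variable {ι : Type*} [Fintype ι]

/-- An eigenvector `e` for a negative eigenvalue is supported on the single index where `d` is not
positive, so `c ⬝ᵥ e = 0` kills that coordinate of `c`. -/
theorem dotProduct_diagonal_mulVec_self_pos [DecidableEq ι] {d e c : ι → ℝ} {μ : ℝ}
    (hd : (Finset.univ.filter fun i => ¬ 0 < d i).card ≤ 1) (hμ : μ < 0)
    (he : diagonal d *ᵥ e = μ • e) (he0 : e ≠ 0) (hce : c ⬝ᵥ e = 0) (hc : c ≠ 0) :
    0 < c ⬝ᵥ diagonal d *ᵥ c := by
  have hd_eq (j : ι) (hj : e j ≠ 0) : d j = μ :=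
    mul_right_cancel₀ hj (by simpa [mulVec_diagonal] using congrFun he j)
  obtain ⟨i₀, hi₀⟩ : ∃ i₀, e i₀ ≠ 0 := by simpa [funext_iff] using he0
  have hd_pos (j : ι) (hj : j ≠ i₀) : 0 < d j := by
    by_contra hj'
    refine hj (Finset.card_le_one.mp hd j (by simpa using hj') i₀ ?_)
    simpa [hd_eq i₀ hi₀] using hμ.le
  have he_eq_zero (j : ι) (hj : j ≠ i₀) : e j = 0 := by
    by_contra hej
    exact (hd_pos j hj).not_gt (hd_eq j hej ▸ hμ)
  have hci₀ : c i₀ = 0 := by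
    rw [dotProduct, Finset.sum_eq_single i₀ (fun j _ hj => by rw [he_eq_zero j hj, mul_zero])
      (by simp)] at hce
    exact (mul_eq_zero.mp hce).resolve_right hi₀
  obtain ⟨j₀, hj₀⟩ : ∃ j₀, c j₀ ≠ 0 := by simpa [funext_iff] using hc
  have hj₀i₀ : j₀ ≠ i₀ := fun h => hj₀ (h ▸ hci₀)
  simp only [mulVec_diagonal, dotProduct]
  refine Finset.sum_pos' (fun j _ => ?_) ⟨j₀, Finset.mem_univ _, ?_⟩
  · rcases eq_or_ne j i₀ with rfl | hj
    · simp [hci₀]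
    · nlinarith [hd_pos j hj, mul_self_nonneg (c j)]
  · nlinarith [hd_pos j₀ hj₀i₀, mul_self_pos.mpr hj₀]

theorem star_mulVec_dotProduct_star_mulVec [DecidableEq ι] {U : Matrix ι ι ℝ}
    (hU : U ∈ unitaryGroup ι ℝ) (u v : ι → ℝ) : (star U *ᵥ u) ⬝ᵥ (star U *ᵥ v) = u ⬝ᵥ v := by
  rw [dotProduct_mulVec, vecMul_mulVec, ← dotProduct_mulVec, star_eq_conjTranspose,
    conjTranspose_eq_transpose_of_trivial, transpose_transpose,
    (mem_orthogonalGroup_iff ι ℝ).mp hU, one_mulVec]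

theorem Matrix.IsHermitian.star_eigenvectorUnitary_mulVec_mulVec [DecidableEq ι]
    {B : Matrix ι ι ℝ} (hB : B.IsHermitian) (v : ι → ℝ) :
    star (hB.eigenvectorUnitary : Matrix ι ι ℝ) *ᵥ (B *ᵥ v) =
      diagonal hB.eigenvalues *ᵥ (star (hB.eigenvectorUnitary : Matrix ι ι ℝ) *ᵥ v) := by
  have h := hB.conjStarAlgAut_star_eigenvectorUnitary
  rw [Unitary.conjStarAlgAut_star_apply, RCLike.ofReal_real_eq_id, Function.id_comp] at h
  rw [← h, mulVec_mulVec, mulVec_mulVec, mul_assoc, mul_assoc,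
    Unitary.mul_star_self_of_mem hB.eigenvectorUnitary.2, mul_one]

theorem Matrix.IsHermitian.dotProduct_mulVec_self_pos_of_dotProduct_eq_zero [DecidableEq ι]
    {B : Matrix ι ι ℝ} (hB : B.IsHermitian)
    (hpos : (Finset.univ.filter fun i => 0 < hB.eigenvalues i).card = Fintype.card ι - 1)
    {o : ι → ℝ} {μ : ℝ} (hμ : μ < 0) (ho : B *ᵥ o = μ • o) (ho0 : o ≠ 0)
    {z : ι → ℝ} (hzo : z ⬝ᵥ o = 0) (hz : z ≠ 0) : 0 < z ⬝ᵥ B *ᵥ z := by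
  set V := star (hB.eigenvectorUnitary : Matrix ι ι ℝ)
  have hV := star_mulVec_dotProduct_star_mulVec hB.eigenvectorUnitary.2
  have hV_ne {v : ι → ℝ} (hv : v ≠ 0) : V *ᵥ v ≠ 0 := fun h =>
    hv (dotProduct_self_eq_zero.mp (by rw [← hV, h, zero_dotProduct]))
  have hnonpos : (Finset.univ.filter fun i => ¬ 0 < hB.eigenvalues i).card ≤ 1 := by
    have := Finset.card_filter_add_card_filter_not (s := Finset.univ) (0 < hB.eigenvalues ·)
    rw [Finset.card_univ] at this
    omega
  rw [← hV, hB.star_eigenvectorUnitary_mulVec_mulVec]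
  refine dotProduct_diagonal_mulVec_self_pos hnonpos hμ ?_
    (hV_ne ho0) (by rwa [hV]) (hV_ne hz)
  rw [← hB.star_eigenvectorUnitary_mulVec_mulVec, ho, mulVec_smul]

theorem eq_of_dotProduct_mulVec_eq_zero {B : Matrix ι ι ℝ} (hB : B.IsSymm) {o : ι → ℝ}
    (hBo : ∀ z, z ⬝ᵥ o = 0 → z ≠ 0 → 0 < z ⬝ᵥ B *ᵥ z) {u v : ι → ℝ}
    (hu : u ⬝ᵥ B *ᵥ u = 0) (hv : v ⬝ᵥ B *ᵥ v = 0) (huvo : u ⬝ᵥ o = v ⬝ᵥ o)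
    (huv : u ⬝ᵥ B *ᵥ v = 0) : u = v := by
  by_contra hne
  have hvu : v ⬝ᵥ B *ᵥ u = 0 := by
    rw [dotProduct_mulVec, ← hB.eq, vecMul_transpose, dotProduct_comm, huv]
  have := hBo (u - v) (by rw [sub_dotProduct, huvo, sub_self]) (sub_ne_zero.mpr hne)
  rw [sub_dotProduct, mulVec_sub, dotProduct_sub, dotProduct_sub, hu, hv, huv, hvu] at this
  norm_num at this

end Signature

theorem Module.End.pow_apply_of_apply_eq_smul {R M : Type*} [CommSemiring R] [AddCommMonoid M]
    [Module R M] {f : Module.End R M} {v : M} {μ : R} (h : f v = μ • v) (k : ℕ) :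
    (f ^ k) v = μ ^ k • v := by
  induction k with
  | zero => simp
  | succ k ih => rw [pow_succ', Module.End.mul_apply, ih, map_smul, h, smul_smul, pow_succ]

section Isometry

variable {ι : Type*} [Fintype ι] {B : Matrix ι ι ℝ} {w : (ι → ℝ) →ₗ[ℝ] (ι → ℝ)}

theorem pow_apply_dotProduct_mulVec_pow_apply
    (hw : ∀ u v, w u ⬝ᵥ B *ᵥ w v = u ⬝ᵥ B *ᵥ v) (k : ℕ) (u v : ι → ℝ) :
    (w ^ k) u ⬝ᵥ B *ᵥ (w ^ k) v = u ⬝ᵥ B *ᵥ v := by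
  induction k generalizing u v with
  | zero => rfl
  | succ k ih => rw [pow_succ, Module.End.mul_apply, Module.End.mul_apply, ih, hw]

theorem pow_apply_dotProduct_mulVec_of_apply_eq_smul
    (hw : ∀ u v, w u ⬝ᵥ B *ᵥ w v = u ⬝ᵥ B *ᵥ v) {p : ι → ℝ} {l : ℝ} (hp : w p = l • p)
    (hl : l ≠ 0) (k : ℕ) (u : ι → ℝ) :
    (w ^ k) u ⬝ᵥ B *ᵥ p = (l ^ k)⁻¹ * (u ⬝ᵥ B *ᵥ p) := by
  have h := pow_apply_dotProduct_mulVec_pow_apply hw k u p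
  rw [Module.End.pow_apply_of_apply_eq_smul hp, mulVec_smul, dotProduct_smul, smul_eq_mul] at h
  rw [← h, inv_mul_cancel_left₀ (pow_ne_zero k hl)]

theorem mul_eq_one_of_apply_eq_smul (hw : ∀ u v, w u ⬝ᵥ B *ᵥ w v = u ⬝ᵥ B *ᵥ v)
    {p p' : ι → ℝ} {l l' : ℝ} (hp : w p = l • p) (hp' : w p' = l' • p')
    (hpp' : p ⬝ᵥ B *ᵥ p' ≠ 0) : l * l' = 1 := by
  have h := hw p p'
  rw [hp, hp', smul_dotProduct, mulVec_smul, dotProduct_smul, smul_smul, smul_eq_mul] at h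
  exact mul_right_cancel₀ hpp' (h.trans (one_mul _).symm)

end Isometry

section Limits

variable {α ι : Type*} [Fintype ι] {F : Filter α}

theorem Filter.Tendsto.dotProduct_const {v : α → ι → ℝ} {y : ι → ℝ} (h : Tendsto v F (𝓝 y))
    (c : ι → ℝ) : Tendsto (fun i => v i ⬝ᵥ c) F (𝓝 (y ⬝ᵥ c)) :=
  ((continuous_id.dotProduct continuous_const).tendsto y).comp h

theorem eventually_dotProduct_ne_zero_of_tendsto_smul {v : α → ι → ℝ} {o y : ι → ℝ}
    (h : Tendsto (fun i => (v i ⬝ᵥ o)⁻¹ • v i) F (𝓝 y)) (hy : y ⬝ᵥ o ≠ 0) :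
    ∀ᶠ i in F, v i ⬝ᵥ o ≠ 0 :=
  ((h.dotProduct_const o).eventually_ne hy).mono fun i hi h0 => hi (by
    rw [smul_dotProduct, h0, smul_eq_mul, mul_zero])

theorem tendsto_abs_atTop_of_tendsto_inv_mul {a s : α → ℝ} {c L : ℝ}
    (hs : Tendsto s F (𝓝 0)) (hs0 : ∀ i, s i ≠ 0) (hc : c ≠ 0) (ha : ∀ᶠ i in F, a i ≠ 0)
    (h : Tendsto (fun i => (a i)⁻¹ * ((s i)⁻¹ * c)) F (𝓝 L)) :
    Tendsto (fun i => |a i|) F atTop := by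
  have hinv : Tendsto (fun i => |a i|⁻¹) F (𝓝 0) := by
    have := (hs.abs.mul_const |c|⁻¹).mul h.abs
    refine (this.congr fun i => ?_).trans (by simp)
    simp only [abs_mul, abs_inv]
    field_simp [abs_ne_zero.mpr (hs0 i), abs_ne_zero.mpr hc]
  have hinv' : Tendsto (fun i => |a i|⁻¹) F (𝓝[>] 0) :=
    tendsto_nhdsWithin_iff.mpr ⟨hinv, ha.mono fun i hi => inv_pos.mpr (abs_pos.mpr hi)⟩
  exact hinv'.inv_tendsto_nhdsGT_zero.congr fun i => inv_inv _

theorem tendsto_inv_mul_nhds_zero_of_tendsto_abs_atTop {a s : α → ℝ}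
    (ha : Tendsto (fun i => |a i|) F atTop) (hs : Tendsto s F (𝓝 0)) (c : ℝ) :
    Tendsto (fun i => (a i)⁻¹ * (s i * c)) F (𝓝 0) := by
  have ha' : Tendsto (fun i => (a i)⁻¹) F (𝓝 0) := (tendsto_zero_iff_abs_tendsto_zero _).mpr
    ((tendsto_inv_atTop_zero.comp ha).congr fun i => (abs_inv _).symm)
  simpa using ha'.mul (hs.mul_const c)

end Limits

theorem stmt16_general (n : ℕ) (B : Matrix (Fin n) (Fin n) ℝ) (hB : B.IsHermitian)
    (hpos : (Finset.univ.filter (fun i => 0 < hB.eigenvalues i)).card = n - 1)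
    (o : Fin n → ℝ) (μ : ℝ) (hμ : μ < 0) (ho : B.mulVec o = μ • o)
    (honorm : o ⬝ᵥ o = 1)
    (w : (Fin n → ℝ) →ₗ[ℝ] (Fin n → ℝ))
    (hw : ∀ u v : Fin n → ℝ, (w u) ⬝ᵥ B.mulVec (w v) = u ⬝ᵥ B.mulVec v)
    (p p' : Fin n → ℝ) (l l' : ℝ)
    (hpQ : p ⬝ᵥ B.mulVec p = 0) (hp1 : p ⬝ᵥ o = 1)
    (hp'Q : p' ⬝ᵥ B.mulVec p' = 0) (hp'1 : p' ⬝ᵥ o = 1)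
    (hpp' : p ≠ p')
    (hp : w p = l • p) (hp' : w p' = l' • p')
    (hl : |l| < 1)
    (x : Fin n → ℝ) (hxQ : x ⬝ᵥ B.mulVec x = 0) (hx1 : x ⬝ᵥ o = 1) (hxp : x ≠ p)
    (ni : ℕ → ℕ) (hni : StrictMono ni)
    (y : Fin n → ℝ) (hyQ : y ⬝ᵥ B.mulVec y = 0) (hy1 : y ⬝ᵥ o = 1)
    (hconv : Filter.Tendsto
      (fun i : ℕ => (((w ^ (ni i)) x) ⬝ᵥ o)⁻¹ • ((w ^ (ni i)) x))
      Filter.atTop (nhds y)) :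
    Filter.Tendsto (fun i : ℕ => |((w ^ (ni i)) x) ⬝ᵥ o|) Filter.atTop Filter.atTop ∧
    Filter.Tendsto
      (fun i : ℕ => |((((w ^ (ni i)) x) ⬝ᵥ o)⁻¹ • ((w ^ (ni i)) x)) ⬝ᵥ B.mulVec p'|)
      Filter.atTop (nhds 0) ∧
    y = p' := by
  have hBo (z : Fin n → ℝ) : z ⬝ᵥ o = 0 → z ≠ 0 → 0 < z ⬝ᵥ B *ᵥ z :=
    hB.dotProduct_mulVec_self_pos_of_dotProduct_eq_zero (by simpa using hpos) hμ ho
      (by rintro rfl; simp at honorm)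
  have hiso {u v : Fin n → ℝ} :=
    eq_of_dotProduct_mulVec_eq_zero (u := u) (v := v) (isHermitian_iff_isSymm.mp hB) hBo
  have hxp0 : x ⬝ᵥ B *ᵥ p ≠ 0 := fun h => hxp (hiso hxQ hpQ (hx1.trans hp1.symm) h)
  have hll' : l * l' = 1 := mul_eq_one_of_apply_eq_smul hw hp hp'
    fun h => hpp' (hiso hpQ hp'Q (hp1.trans hp'1.symm) h)
  have hl0 : l ≠ 0 := left_ne_zero_of_mul_eq_one hll'
  have hlim : Tendsto (fun i => l ^ ni i) atTop (𝓝 0) :=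
    (tendsto_pow_atTop_nhds_zero_of_abs_lt_one hl).comp hni.tendsto_atTop
  have hdot_eigen (i : ℕ) (q : Fin n → ℝ) (m : ℝ) (hq : w q = m • q) (hm : m ≠ 0) :
      ((((w ^ ni i) x) ⬝ᵥ o)⁻¹ • (w ^ ni i) x) ⬝ᵥ B *ᵥ q =
        (((w ^ ni i) x) ⬝ᵥ o)⁻¹ * ((m ^ ni i)⁻¹ * (x ⬝ᵥ B *ᵥ q)) := by
    rw [smul_dotProduct, smul_eq_mul, pow_apply_dotProduct_mulVec_of_apply_eq_smul hw hq hm]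
  have habs := tendsto_abs_atTop_of_tendsto_inv_mul hlim (fun i => pow_ne_zero _ hl0) hxp0
    (eventually_dotProduct_ne_zero_of_tendsto_smul hconv (by rw [hy1]; exact one_ne_zero))
    ((hconv.dotProduct_const (B *ᵥ p)).congr fun i => hdot_eigen i p l hp hl0)
  have hp'lim : Tendsto (fun i => ((((w ^ ni i) x) ⬝ᵥ o)⁻¹ • (w ^ ni i) x) ⬝ᵥ B *ᵥ p')
      atTop (𝓝 0) := by
    refine (tendsto_inv_mul_nhds_zero_of_tendsto_abs_atTop habs hlim (x ⬝ᵥ B *ᵥ p')).congr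
      fun i => ?_
    rw [hdot_eigen i p' l' hp' (right_ne_zero_of_mul_eq_one hll'),
      ← inv_eq_of_mul_eq_one_right hll', inv_pow, inv_inv]
  refine ⟨habs, by simpa using hp'lim.abs, hiso hyQ hp'Q (hy1.trans hp'1.symm) ?_⟩
  exact tendsto_nhds_unique (hconv.dotProduct_const (B *ᵥ p')) hp'lim

/-- If `w` preserves `B` (signature `(n-1,1)`) with eigenvectors
`p ≠ p'` in `Q̂` of eigenvalues `l, l'` and `|l| < 1`, and a subsequence of normalized
iterates of `x ∈ Q̂` (`x ≠ p`, so `B(x,p) ≠ 0`) converges to `y ∈ Q̂`, then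
`||w^{nᵢ}(x)|₁| → ∞`, `|B(w^{nᵢ}·x, p')| → 0`, and `y = p'`. -/
theorem stmt16 (n : ℕ) (B : Matrix (Fin n) (Fin n) ℝ) (hB : B.IsHermitian)
    (hneg : (Finset.univ.filter (fun i => hB.eigenvalues i < 0)).card = 1)
    (hpos : (Finset.univ.filter (fun i => 0 < hB.eigenvalues i)).card = n - 1)
    (o : Fin n → ℝ) (μ : ℝ) (hμ : μ < 0) (ho : B.mulVec o = μ • o)
    (honorm : o ⬝ᵥ o = 1)
    (w : (Fin n → ℝ) →ₗ[ℝ] (Fin n → ℝ))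
    (hw : ∀ u v : Fin n → ℝ, (w u) ⬝ᵥ B.mulVec (w v) = u ⬝ᵥ B.mulVec v)
    (p p' : Fin n → ℝ) (l l' : ℝ)
    (hpQ : p ⬝ᵥ B.mulVec p = 0) (hp1 : p ⬝ᵥ o = 1)
    (hp'Q : p' ⬝ᵥ B.mulVec p' = 0) (hp'1 : p' ⬝ᵥ o = 1)
    (hpp' : p ≠ p')
    (hp : w p = l • p) (hp' : w p' = l' • p')
    (hl : |l| < 1)
    (x : Fin n → ℝ) (hxQ : x ⬝ᵥ B.mulVec x = 0) (hx1 : x ⬝ᵥ o = 1) (hxp : x ≠ p)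
    (ni : ℕ → ℕ) (hni : StrictMono ni)
    (y : Fin n → ℝ) (hyQ : y ⬝ᵥ B.mulVec y = 0) (hy1 : y ⬝ᵥ o = 1)
    (hconv : Filter.Tendsto
      (fun i : ℕ => (((w ^ (ni i)) x) ⬝ᵥ o)⁻¹ • ((w ^ (ni i)) x))
      Filter.atTop (nhds y)) :
    Filter.Tendsto (fun i : ℕ => |((w ^ (ni i)) x) ⬝ᵥ o|) Filter.atTop Filter.atTop ∧
    Filter.Tendsto
      (fun i : ℕ => |((((w ^ (ni i)) x) ⬝ᵥ o)⁻¹ • ((w ^ (ni i)) x)) ⬝ᵥ B.mulVec p'|)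
      Filter.atTop (nhds 0) ∧
    y = p' :=
  stmt16_general n B hB hpos o μ hμ ho honorm w hw p p' l l' hpQ hp1 hp'Q hp'1 hpp' hp hp' hl x hxQ
    hx1 hxp ni hni y hyQ hy1 hconv
end
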